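/- arXiv:2002.07799 — 7 statements merged into one kernel-verified Lean document; each statement's English description precedes it below -/
import Mathlib

section
/- In a graph G with source s and sink t in which every vertex and every edge lies on some s-t path, for any induced subgraph G' containing at least one edge, there exist vertices u, v in G' such that there is a path P_su from s to u and a path P_vt from v to t with P_su and P_vt vertex-disjoint, P_su intersecting G' only in u, and P_vt intersecting G' only in v. -/
/-!
Take an `s`-`t` path `w` through an edge of `S`; it meets `S` in at least two vertices. Cut `w`
at the first vertex `u` of `S` on it: the part before `u` is `P`. On the remaining part, walking
back from `t`, stop at the first vertex `v ∈ S` other than `u`: this gives `Q`. Since `w` is a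
path and `Q` avoids `u`, the two pieces are disjoint.
-/

open SimpleGraph

noncomputable def trackSeq {V : Type} (T : Set V) (l : List V) : List V :=
  l.filter (fun v => @decide (v ∈ T) (Classical.propDecidable _))

/-- `T` is a tracking set for `s`-`t` paths in `G`: distinct `s`-`t` paths have
distinct sequences of `T`-vertices along them. -/
def IsTrackingSet {V : Type} (G : SimpleGraph V) (s t : V) (T : Set V) : Prop :=
  ∀ p q : G.Walk s t, p.IsPath → q.IsPath →
    trackSeq T p.support = trackSeq T q.support → p = q

/-- Every vertex and every edge of `G` lies on some `s`-`t` path. -/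
def Reduced {V : Type} (G : SimpleGraph V) (s t : V) : Prop :=
  (∀ v : V, ∃ p : G.Walk s t, p.IsPath ∧ v ∈ p.support) ∧
  (∀ e ∈ G.edgeSet, ∃ p : G.Walk s t, p.IsPath ∧ e ∈ p.edges)

namespace SimpleGraph.Walk

variable {V : Type} {G : SimpleGraph V}

theorem exists_eq_append_of_exists_mem_support {S : Set V} :
    ∀ {x y : V} (w : G.Walk x y), (∃ z ∈ w.support, z ∈ S) →
      ∃ u ∈ S, ∃ (p : G.Walk x u) (r : G.Walk u y), w = p.append r ∧
        ∀ z ∈ p.support, z ∈ S → z = u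
  | _, _, .nil, ⟨z, hz, hzS⟩ => by
    obtain rfl := List.mem_singleton.mp hz
    exact ⟨z, hzS, nil, nil, rfl, by simp⟩
  | x, _, .cons hadj w', hmeet => by
    by_cases hx : x ∈ S
    · exact ⟨x, hx, nil, cons hadj w', rfl, by simp⟩
    · obtain ⟨u, hu, p, r, rfl, hp⟩ :=
        exists_eq_append_of_exists_mem_support w' (by simpa [hx] using hmeet)
      refine ⟨u, hu, cons hadj p, r, rfl, ?_⟩
      intro z hz hzS
      rcases List.mem_cons.mp hz with rfl | hz
      exacts [absurd hzS hx, hp z hz hzS]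

theorem IsPath.exists_disjoint_entry_exit_paths {s t a b : V} {S : Set V} {w : G.Walk s t}
    (hw : w.IsPath) (ha : a ∈ S) (hb : b ∈ S) (hab : a ≠ b)
    (haw : a ∈ w.support) (hbw : b ∈ w.support) :
    ∃ u ∈ S, ∃ v ∈ S, ∃ p : G.Walk s u, ∃ q : G.Walk v t,
      p.IsPath ∧ q.IsPath ∧
      (∀ x, x ∈ p.support → x ∉ q.support) ∧
      {x | x ∈ S ∧ x ∈ p.support} = {u} ∧
      {x | x ∈ S ∧ x ∈ q.support} = {v} := by
  obtain ⟨u, hu, P, r, rfl, hP⟩ := exists_eq_append_of_exists_mem_support w ⟨a, haw, ha⟩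
  obtain ⟨c, hcS, hcu, hcr⟩ : ∃ c ∈ S, c ≠ u ∧ c ∈ r.support := by
    obtain ⟨c, hcS, hcu, hcw⟩ : ∃ c ∈ S, c ≠ u ∧ c ∈ (P.append r).support := by
      by_cases hau : a = u
      · exact ⟨b, hb, hau ▸ hab.symm, hbw⟩
      · exact ⟨a, ha, hau, haw⟩
    refine ⟨c, hcS, hcu, ?_⟩
    rcases (mem_support_append_iff P r).mp hcw with hcP | hcr
    exacts [absurd (hP c hcP hcS) hcu, hcr]
  have hr : r.reverse.IsPath := hw.of_append_right.reverse
  obtain ⟨v, ⟨hvS, hvu⟩, Q, R, hQR, hQ⟩ := exists_eq_append_of_exists_mem_support (S := S \ {u})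
    r.reverse ⟨c, by simpa using hcr, hcS, hcu⟩
  rw [hQR] at hr
  have huQ : u ∉ Q.support := fun huQ =>
    hr.ne_of_mem_support_of_append (Ne.symm hvu) huQ R.end_mem_support rfl
  have hQS : ∀ z ∈ Q.support, z ∈ S → z = v := fun z hz hzS =>
    hQ z hz ⟨hzS, fun hzu => huQ (hzu ▸ hz)⟩
  have hQr : ∀ z ∈ Q.support, z ∈ r.support := fun z hz => by
    have : z ∈ r.reverse.support := hQR ▸ (mem_support_append_iff Q R).mpr (Or.inl hz)
    simpa using this
  refine ⟨u, hu, v, hvS, P, Q.reverse, hw.of_append_left, hr.of_append_left.reverse, ?_, ?_, ?_⟩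
  · intro x hxP hxQ
    rw [support_reverse, List.mem_reverse] at hxQ
    exact hw.ne_of_mem_support_of_append (fun h => huQ (h ▸ hxQ)) hxP (hQr x hxQ) rfl
  · exact Set.eq_singleton_iff_unique_mem.mpr
      ⟨⟨hu, P.end_mem_support⟩, fun x ⟨hxS, hxP⟩ => hP x hxP hxS⟩
  · refine Set.eq_singleton_iff_unique_mem.mpr ⟨⟨hvS, Q.reverse.start_mem_support⟩, ?_⟩
    rintro x ⟨hxS, hxQ⟩
    rw [support_reverse, List.mem_reverse] at hxQ
    exact hQS x hxQ hxS

end SimpleGraph.Walk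

theorem stmt0_general {V : Type} (G : SimpleGraph V) (s t : V)
    (hred : Reduced G s t) (S : Set V)
    (hedge : ∃ a ∈ S, ∃ b ∈ S, G.Adj a b) :
    ∃ u ∈ S, ∃ v ∈ S, ∃ p : G.Walk s u, ∃ q : G.Walk v t,
      p.IsPath ∧ q.IsPath ∧
      (∀ x, x ∈ p.support → x ∉ q.support) ∧
      {x | x ∈ S ∧ x ∈ p.support} = {u} ∧
      {x | x ∈ S ∧ x ∈ q.support} = {v} := by
  obtain ⟨a, haS, b, hbS, hab⟩ := hedge
  obtain ⟨w, hw, hwab⟩ := hred.2 s(a, b) hab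
  exact hw.exists_disjoint_entry_exit_paths haS hbS hab.ne
    (w.fst_mem_support_of_mem_edges hwab) (w.snd_mem_support_of_mem_edges hwab)

theorem stmt0 {V : Type} [Fintype V] (G : SimpleGraph V) (s t : V)
    (hred : Reduced G s t) (S : Set V)
    (hedge : ∃ a ∈ S, ∃ b ∈ S, G.Adj a b) :
    ∃ u ∈ S, ∃ v ∈ S, ∃ p : G.Walk s u, ∃ q : G.Walk v t,
      p.IsPath ∧ q.IsPath ∧
      (∀ x, x ∈ p.support → x ∉ q.support) ∧
      {x | x ∈ S ∧ x ∈ p.support} = {u} ∧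
      {x | x ∈ S ∧ x ∈ q.support} = {v} :=
  stmt0_general G s t hred S hedge
end

section
/- Let G be a simple undirected graph with source s and sink t, let e = (a,b) be an edge, and let x be a common neighbor of a and b. If there exists an s-t path P in G - x that uses edge e, then every tracking set of G contains x. -/
open SimpleGraph

lemma detour {V : Type} (G : SimpleGraph V) (a b x : V)
    (hax : G.Adj a x) (hbx : G.Adj b x) :
    ∀ {s t : V} (p : G.Walk s t), p.IsPath → x ∉ p.support → s(a,b) ∈ p.edges →
    ∃ q : G.Walk s t, q.IsPath ∧ ∃ l1 l2 : List V,
      p.support = l1 ++ l2 ∧ q.support = l1 ++ x :: l2 := by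
  intro s t p
  induction p with
  | nil => simp
  | @cons u v w h p ih =>
    intro hp hx he
    rw [Walk.support_cons, List.mem_cons] at hx
    push_neg at hx
    obtain ⟨hxu, hxp⟩ := hx
    rw [Walk.cons_isPath_iff] at hp
    obtain ⟨hp', hup⟩ := hp
    rw [Walk.edges_cons, List.mem_cons] at he
    rcases he with he | he
    · -- first edge is s(a,b)
      rw [Sym2.eq_iff] at he
      have hux : G.Adj u x := by
        rcases he with ⟨h1, h2⟩ | ⟨h1, h2⟩
        · exact h1 ▸ hax
        · exact h2 ▸ hbx
      have hxv : G.Adj x v := by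
        rcases he with ⟨h1, h2⟩ | ⟨h1, h2⟩
        · exact h2 ▸ hbx.symm
        · exact h1 ▸ hax.symm
      refine ⟨Walk.cons hux (Walk.cons hxv p), ?_, [u], p.support, by simp, by simp⟩
      rw [Walk.cons_isPath_iff, Walk.cons_isPath_iff]
      refine ⟨⟨hp', by simpa using hxp⟩, ?_⟩
      simp only [Walk.support_cons, List.mem_cons]
      push_neg
      exact ⟨fun h' => hxu h'.symm, hup⟩
    · obtain ⟨q, hq, l1, l2, hps, hqs⟩ := ih hp' (by simpa using hxp) he
      refine ⟨Walk.cons h q, ?_, u :: l1, l2, by simp [hps], by simp [hqs]⟩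
      rw [Walk.cons_isPath_iff]
      refine ⟨hq, ?_⟩
      rw [hqs]
      intro hmem
      rw [hps] at hup
      simp only [List.mem_append, List.mem_cons] at hmem hup
      push_neg at hup
      rcases hmem with h1 | h1 | h1
      · exact hup.1 h1
      · exact hxu h1.symm
      · exact hup.2 h1

theorem stmt2 {V : Type} [Fintype V] (G : SimpleGraph V) (s t a b x : V)
    (hab : G.Adj a b) (hax : G.Adj a x) (hbx : G.Adj b x)
    (hP : ∃ p : G.Walk s t, p.IsPath ∧ x ∉ p.support ∧ s(a, b) ∈ p.edges) :
    ∀ T : Set V, IsTrackingSet G s t T → x ∈ T := by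
  intro T hT
  by_contra hxT
  obtain ⟨p, hp, hxp, he⟩ := hP
  obtain ⟨q, hq, l1, l2, hps, hqs⟩ := detour G a b x hax hbx p hp hxp he
  have hfx : (fun v => @decide (v ∈ T) (Classical.propDecidable _)) x = false := by
    simpa using hxT
  have heq : trackSeq T p.support = trackSeq T q.support := by
    unfold trackSeq
    rw [hps, hqs, List.filter_append, List.filter_append, List.filter_cons]
    simp [hxT]
  have := hT p q hp hq heq
  rw [this, hqs] at hxp
  exact hxp (by simp)
end

section
/- Let G be a chordal s-t graph in which every vertex and edge lies on some s-t path. Let T be the set of all vertices x such that x is a common neighbor of the endpoints a, b of some edge e = (a,b) and there exists an s-t path in G - x using e. Then T is a tracking set for G. -/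
open SimpleGraph

/-- Every cycle of length at least 4 has a chord. -/
def IsChordal {V : Type} (G : SimpleGraph V) : Prop :=
  ∀ (u : V) (c : G.Walk u u), c.IsCycle → 4 ≤ c.length →
    ∃ x ∈ c.support, ∃ y ∈ c.support, G.Adj x y ∧ s(x, y) ∉ c.edges

/-- The set of vertices forced into every tracking set: common neighbours `x` of the
endpoints of some edge `(a,b)` such that some `s`-`t` path avoiding `x` uses `(a,b)`. -/
def forcedSet {V : Type} (G : SimpleGraph V) (s t : V) : Set V :=
  {x | ∃ a b : V, G.Adj a b ∧ G.Adj a x ∧ G.Adj b x ∧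
    ∃ p : G.Walk s t, p.IsPath ∧ x ∉ p.support ∧ s(a, b) ∈ p.edges}

/-!
Vertices outside the forced set lie on every `s`-`t` path. Indeed, if an `s`-`t` path `P` passes
through `v` and another one avoids `v`, the latter contains a walk from a vertex `γ` before `v` on
`P` to a vertex `δ` after `v` meeting `P` only at its ends; together with the segment `W₁` of `P`
from `γ` to `δ` it bounds a cycle (a `Lens`). A chord of this cycle, which chordality provides as
long as the cycle has length at least four, yields a smaller lens around `v`, possibly after
rerouting `P` through the chord. A lens of length three is a triangle `γ v δ`, and replacing `W₁`
by the edge `γ δ` gives an `s`-`t` path avoiding `v` through an edge whose ends are both adjacent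
to `v`.

A set `T` containing every vertex that some `s`-`t` path avoids is tracking: if two `s`-`t` paths
with the same `T`-sequence first diverge into `a ≠ b`, say with `a ∉ T` (if both were in `T` they
would be the next entries of the common sequence), then `b` lies further along the first path
(either as a `T`-vertex or as a vertex of every path), and jumping from the divergence point
straight to `b` gives an `s`-`t` walk avoiding `a`.
-/

namespace SimpleGraph.Walk

variable {V : Type} {G : SimpleGraph V} {u v w x y : V}

theorem isPath_append_iff {p : G.Walk u v} {q : G.Walk v w} :
    (p.append q).IsPath ↔
      p.IsPath ∧ q.IsPath ∧ ∀ x ∈ p.support, x ∈ q.support → x = v := by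
  rw [isPath_def, isPath_def, isPath_def, support_append, List.nodup_append',
    ← q.cons_tail_support, List.nodup_cons, List.tail_cons]
  constructor
  · rintro ⟨hp, hq, hdisj⟩
    refine ⟨hp, ⟨fun hv => hdisj p.end_mem_support hv, hq⟩, fun x hxp hxq => ?_⟩
    rcases List.mem_cons.1 hxq with rfl | hxq
    · rfl
    · exact absurd hxq (hdisj hxp)
  · rintro ⟨hp, ⟨hv, hq⟩, hdisj⟩
    refine ⟨hp, hq, fun x hxp hxq => ?_⟩
    obtain rfl := hdisj x hxp (List.mem_cons_of_mem _ hxq)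
    exact hv hxq

theorem IsPath.eq_of_mem_support_of_append {p : G.Walk u v} {q : G.Walk v w}
    (h : (p.append q).IsPath) (hx : x ∈ p.support) (hx' : x ∈ q.support) : x = v :=
  (isPath_append_iff.1 h).2.2 x hx hx'

theorem length_pos_of_ne (p : G.Walk u w) (h : u ≠ w) : 0 < p.length :=
  not_nil_iff_lt_length.1 (not_nil_of_ne h)

theorem two_le_length_of_mem_support {p : G.Walk u w} (hv : v ∈ p.support) (hu : v ≠ u)
    (hw : v ≠ w) : 2 ≤ p.length := by
  rcases p with _ | ⟨h, _ | ⟨h', p⟩⟩ <;> simp_all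

theorem adj_of_length_eq_two {p : G.Walk u w} (h : p.length = 2) (hv : v ∈ p.support)
    (hu : v ≠ u) (hw : v ≠ w) : G.Adj u v ∧ G.Adj v w := by
  rcases p with _ | ⟨h₁, _ | ⟨h₂, _ | _⟩⟩ <;> simp_all

theorem mem_edges_of_length_eq_one {p : G.Walk u w} (h : p.length = 1) :
    s(u, w) ∈ p.edges := by
  rw [eq_of_length_le_one h.le (adj_of_length_eq_one h).length_toWalk.le]
  simp

theorem two_le_length_of_notMem_edges {M : G.Walk x y} (hxy : G.Adj x y)
    (h : s(x, y) ∉ M.edges) : 2 ≤ M.length := by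
  by_contra! hM
  interval_cases hl : M.length
  · exact hxy.ne (eq_of_length_eq_zero hl)
  · exact h (mem_edges_of_length_eq_one hl)

theorem exists_append_append_of_mem_support {p : G.Walk u w} (hx : x ∈ p.support)
    (hy : y ∈ p.support) :
    (∃ (A : G.Walk u x) (M : G.Walk x y) (B : G.Walk y w), p = A.append (M.append B)) ∨
      ∃ (A : G.Walk u y) (M : G.Walk y x) (B : G.Walk x w), p = A.append (M.append B) := by
  obtain ⟨A, B, rfl⟩ := mem_support_iff_exists_append.1 hx
  rcases (mem_support_append_iff _ _).1 hy with hy | hy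
  · obtain ⟨A, M, rfl⟩ := mem_support_iff_exists_append.1 hy
    exact Or.inr ⟨A, M, B, (append_assoc _ _ _).symm⟩
  · obtain ⟨M, B, rfl⟩ := mem_support_iff_exists_append.1 hy
    exact Or.inl ⟨A, M, B, rfl⟩

theorem IsPath.shortcut {A : G.Walk u x} {M : G.Walk x y} {B : G.Walk y w}
    (h : (A.append (M.append B)).IsPath) (hxy : G.Adj x y) :
    (A.append (cons hxy B)).IsPath := by
  obtain ⟨hA, hMB, hAMB⟩ := isPath_append_iff.1 h
  obtain ⟨-, hB, hMB⟩ := isPath_append_iff.1 hMB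
  refine isPath_append_iff.2
    ⟨hA, hB.cons fun hx => hxy.ne (hMB x M.start_mem_support hx), fun z hzA hz => ?_⟩
  rcases List.mem_cons.1 hz with rfl | hzB
  · rfl
  · exact hAMB z hzA ((mem_support_append_iff _ _).2 (Or.inr hzB))

theorem support_shortcut_subset (A : G.Walk u x) (M : G.Walk x y) (B : G.Walk y w)
    (hxy : G.Adj x y) : (A.append (cons hxy B)).support ⊆ (A.append (M.append B)).support := by
  intro z
  simp only [mem_support_append_iff, support_cons, List.mem_cons]
  rintro (hz | rfl | hz) <;> simp_all

theorem support_append_append_subset (P₁ : G.Walk u x) {W W' : G.Walk x y} (P₂ : G.Walk y w)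
    (hsub : W'.support ⊆ W.support) :
    (P₁.append (W'.append P₂)).support ⊆ (P₁.append (W.append P₂)).support := by
  intro z
  simp only [mem_support_append_iff]
  exact Or.imp_right (Or.imp_left (@hsub z))

theorem IsPath.append_append_of_support_subset {P₁ : G.Walk u x} {W W' : G.Walk x y}
    {P₂ : G.Walk y w} (h : (P₁.append (W.append P₂)).IsPath) (hW' : W'.IsPath)
    (hsub : W'.support ⊆ W.support) : (P₁.append (W'.append P₂)).IsPath := by
  obtain ⟨hP₁, hWP₂, h₁⟩ := isPath_append_iff.1 h
  obtain ⟨-, hP₂, h₂⟩ := isPath_append_iff.1 hWP₂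
  refine isPath_append_iff.2
    ⟨hP₁, isPath_append_iff.2 ⟨hW', hP₂, fun z hz => h₂ z (hsub hz)⟩, fun z hz hz' => ?_⟩
  refine h₁ z hz ?_
  rcases (mem_support_append_iff _ _).1 hz' with hz' | hz'
  · exact (mem_support_append_iff _ _).2 (Or.inl (hsub hz'))
  · exact (mem_support_append_iff _ _).2 (Or.inr hz')

theorem exists_walk_to_first_mem (r : G.Walk u w) {Y : Set V} (hw : w ∈ Y) :
    ∃ δ ∈ Y, ∃ W : G.Walk u δ, W.support ⊆ r.support ∧ ∀ z ∈ W.support, z ∈ Y → z = δ := by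
  induction r with
  | nil => exact ⟨_, hw, nil, List.Subset.refl _, by simp⟩
  | cons h r ih =>
    rename_i u _ _
    by_cases hu : u ∈ Y
    · exact ⟨u, hu, nil, by simp, by simp⟩
    obtain ⟨δ, hδ, W, hsub, hW⟩ := ih hw
    refine ⟨δ, hδ, cons h W, List.cons_subset_cons _ hsub, fun z hz hzY => ?_⟩
    rcases List.mem_cons.1 hz with rfl | hz
    · exact absurd hzY hu
    · exact hW z hz hzY

theorem exists_walk_between (r : G.Walk u w) {X Y : Set V} (hu : u ∈ X) (hw : w ∈ Y) :
    ∃ γ ∈ X, ∃ δ ∈ Y, ∃ W : G.Walk γ δ, W.support ⊆ r.support ∧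
      ∀ z ∈ W.support, z ∈ X ∨ z ∈ Y → z = γ ∨ z = δ := by
  obtain ⟨δ, hδ, W₀, hsub₀, h₀⟩ := r.exists_walk_to_first_mem hw
  obtain ⟨γ, hγ, W₁, hsub₁, h₁⟩ := W₀.reverse.exists_walk_to_first_mem hu
  have hsub₁' : W₁.support ⊆ W₀.support := fun z hz => by simpa using hsub₁ hz
  refine ⟨γ, hγ, δ, hδ, W₁.reverse, fun z hz => hsub₀ (hsub₁' (by simpa using hz)),
    fun z hz hzXY => ?_⟩
  rw [support_reverse, List.mem_reverse] at hz
  rcases hzXY with hzX | hzY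
  · exact Or.inl (h₁ z hz hzX)
  · exact Or.inr (h₀ z (hsub₁' hz) hzY)

end SimpleGraph.Walk

open SimpleGraph Walk

section Tracking

variable {V : Type} {G : SimpleGraph V} {T : Set V} {s t u x : V}

theorem mem_trackSeq {l : List V} : x ∈ trackSeq T l ↔ x ∈ l ∧ x ∈ T := by
  simp [trackSeq]

theorem trackSeq_cons_of_mem (hx : x ∈ T) (l : List V) :
    trackSeq T (x :: l) = x :: trackSeq T l := by
  simp [trackSeq, hx]

theorem trackSeq_cons_of_notMem (hx : x ∉ T) (l : List V) :
    trackSeq T (x :: l) = trackSeq T l := by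
  simp [trackSeq, hx]

theorem trackSeq_cons_inj {l l' : List V} :
    trackSeq T (x :: l) = trackSeq T (x :: l') ↔ trackSeq T l = trackSeq T l' := by
  by_cases hx : x ∈ T
  · simp [trackSeq_cons_of_mem hx]
  · simp [trackSeq_cons_of_notMem hx]

theorem mem_support_of_trackSeq_eq (hT : ∀ x ∉ T, ∀ r : G.Walk s t, x ∈ r.support)
    {c : G.Walk s u} {p q : G.Walk u t} (hq : (c.append q).IsPath)
    (h : trackSeq T p.support = trackSeq T q.support) (hx : x ∈ q.support) :
    x ∈ p.support := by
  by_cases hxT : x ∈ T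
  · exact (mem_trackSeq.1 (h ▸ mem_trackSeq.2 ⟨hx, hxT⟩)).1
  rcases (mem_support_append_iff _ _).1 (hT x hxT (c.append p)) with hxc | hxp
  · rw [hq.eq_of_mem_support_of_append hxc hx]
    exact p.start_mem_support
  · exact hxp

theorem trackSeq_ne_of_notMem (hT : ∀ x ∉ T, ∀ r : G.Walk s t, x ∈ r.support)
    {a b : V} {c : G.Walk s u} {ha : G.Adj u a} {hb : G.Adj u b} {p : G.Walk a t}
    {q : G.Walk b t} (hp : (c.append (cons ha p)).IsPath) (hq : (c.append (cons hb q)).IsPath)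
    (hab : a ≠ b) (haT : a ∉ T) :
    trackSeq T (cons ha p).support ≠ trackSeq T (cons hb q).support := by
  intro h
  have hbp : b ∈ p.support := by
    have := mem_support_of_trackSeq_eq hT hq h (by simp : b ∈ (cons hb q).support)
    exact (List.mem_cons.1 this).resolve_left hb.ne.symm
  obtain ⟨p₁, p₂, rfl⟩ := mem_support_iff_exists_append.1 hbp
  have hp₁₂ : (p₁.append p₂).IsPath := (isPath_append_iff.1 hp).2.1.of_cons
  rcases (mem_support_append_iff _ _).1 (hT a haT (c.append (cons hb p₂))) with hac | hap₂
  · exact ha.ne (hp.eq_of_mem_support_of_append hac (by simp)).symm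
  · rcases List.mem_cons.1 hap₂ with rfl | hap₂
    · exact ha.ne rfl
    · exact hab (hp₁₂.eq_of_mem_support_of_append p₁.start_mem_support hap₂)

theorem eq_of_isPath_append_of_trackSeq_eq (hT : ∀ x ∉ T, ∀ r : G.Walk s t, x ∈ r.support)
    (c : G.Walk s u) (p q : G.Walk u t) (hp : (c.append p).IsPath) (hq : (c.append q).IsPath)
    (h : trackSeq T p.support = trackSeq T q.support) : p = q := by
  induction p with
  | nil => exact (isPath_iff_nil.1 (isPath_append_iff.1 hq).2.1).eq_nil.symm
  | cons ha p ih =>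
    cases q with
    | nil => exact absurd (isPath_append_iff.1 hp).2.1 (by simp)
    | cons hb q =>
      rename_i a _ b
      by_cases hab : a = b
      · subst hab
        rw [ih hT (c.concat ha) q (by rwa [concat_append]) (by rwa [concat_append])
          (trackSeq_cons_inj.1 h)]
      by_cases haT : a ∈ T
      · by_cases hbT : b ∈ T
        · have h' := trackSeq_cons_inj.1 h
          rw [← p.cons_tail_support, ← q.cons_tail_support, trackSeq_cons_of_mem haT,
            trackSeq_cons_of_mem hbT] at h'
          exact absurd (List.cons.inj h').1 hab
        · exact absurd h.symm (trackSeq_ne_of_notMem hT hq hp (Ne.symm hab) hbT)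
      · exact absurd h (trackSeq_ne_of_notMem hT hp hq hab haT)

theorem isTrackingSet_of_forall_mem_support
    (hT : ∀ x ∉ T, ∀ r : G.Walk s t, x ∈ r.support) : IsTrackingSet G s t T :=
  fun p q hp hq h =>
    eq_of_isPath_append_of_trackSeq_eq hT nil p q (by simpa using hp) (by simpa using hq) h

end Tracking

namespace SimpleGraph

variable {V : Type} {G : SimpleGraph V} {s t v : V}

structure Lens (G : SimpleGraph V) (s t v : V) where
  {γ δ : V}
  P₁ : G.Walk s γ
  W₁ : G.Walk γ δ
  P₂ : G.Walk δ t
  W₂ : G.Walk γ δ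
  isPath : (P₁.append (W₁.append P₂)).IsPath
  isPath_W₂ : W₂.IsPath
  eq_of_mem_W₂ : ∀ x ∈ W₂.support, x ∈ (P₁.append (W₁.append P₂)).support → x = γ ∨ x = δ
  mem_W₁ : v ∈ W₁.support
  ne_start : v ≠ γ
  ne_end : v ≠ δ

namespace Lens

variable (L : Lens G s t v)

def size : ℕ := L.W₁.length + L.W₂.length

theorem isPath_W₁ : L.W₁.IsPath := L.isPath.of_append_right.of_append_left

theorem eq_of_mem_W₁_of_mem_W₂ {x : V} (h₁ : x ∈ L.W₁.support) (h₂ : x ∈ L.W₂.support) :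
    x = L.γ ∨ x = L.δ :=
  L.eq_of_mem_W₂ x h₂ (by simp [mem_support_append_iff, h₁])

theorem two_le_length_W₁ : 2 ≤ L.W₁.length :=
  two_le_length_of_mem_support L.mem_W₁ L.ne_start L.ne_end

theorem start_ne_end : L.γ ≠ L.δ := fun h => by
  have := length_eq_zero_iff.2 (L.isPath_W₁.nil_iff_eq.2 h)
  have := L.two_le_length_W₁
  omega

theorem one_le_length_W₂ : 1 ≤ L.W₂.length :=
  L.W₂.length_pos_of_ne L.start_ne_end

def reverse : Lens G t s v where
  P₁ := L.P₂.reverse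
  W₁ := L.W₁.reverse
  P₂ := L.P₁.reverse
  W₂ := L.W₂.reverse
  isPath := by simpa [reverse_append, append_assoc] using L.isPath.reverse
  isPath_W₂ := L.isPath_W₂.reverse
  eq_of_mem_W₂ x hx hxP := by
    simp only [support_reverse, List.mem_reverse, append_assoc, mem_support_append_iff] at hx hxP
    exact (L.eq_of_mem_W₂ x hx (by simp only [mem_support_append_iff]; tauto)).symm
  mem_W₁ := by simpa using L.mem_W₁
  ne_start := L.ne_end
  ne_end := L.ne_start

theorem size_reverse : L.reverse.size = L.size := by
  simp [size, reverse]

theorem isCycle : (L.W₁.append L.W₂.reverse).IsCycle := by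
  refine L.isPath_W₁.isCycle_append L.isPath_W₂.reverse (fun z hz₁ hz₂ => ?_)
    (Or.inl (by have := L.two_le_length_W₁; omega))
  have hW₁ := L.isPath_W₁.support_nodup
  have hW₂ := L.isPath_W₂.reverse.support_nodup
  rw [← cons_tail_support, List.nodup_cons] at hW₁ hW₂
  rcases L.eq_of_mem_W₁_of_mem_W₂ (List.mem_of_mem_tail hz₁)
    (by simpa using List.mem_of_mem_tail hz₂) with rfl | rfl
  · exact hW₁.1 hz₁
  · exact hW₂.1 hz₂

theorem mem_forcedSet_of_size_le_three (h : L.size ≤ 3) : v ∈ forcedSet G s t := by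
  have h₁ := L.two_le_length_W₁
  have h₂ := L.one_le_length_W₂
  unfold size at h
  obtain ⟨hγv, hvδ⟩ := adj_of_length_eq_two (by omega) L.mem_W₁ L.ne_start L.ne_end
  have hγδ : G.Adj L.γ L.δ := adj_of_length_eq_one (p := L.W₂) (by omega)
  have hW₂ : L.W₂ = hγδ.toWalk := eq_of_length_le_one (by omega) (by simp)
  have hvP₁ : v ∉ L.P₁.support := fun hv =>
    L.ne_start (L.isPath.eq_of_mem_support_of_append hv
      (by simp [mem_support_append_iff, L.mem_W₁]))
  have hvP₂ : v ∉ L.P₂.support := fun hv =>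
    L.ne_end ((isPath_append_iff.1 L.isPath).2.1.eq_of_mem_support_of_append L.mem_W₁ hv)
  refine ⟨L.γ, L.δ, hγδ, hγv, hvδ.symm, L.P₁.append (L.W₂.append L.P₂),
    L.isPath.append_append_of_support_subset L.isPath_W₂ (by simp [hW₂]), ?_, by simp [hW₂]⟩
  simp [mem_support_append_iff, hW₂, hvP₁, hvP₂, L.ne_start]

theorem exists_size_lt_of_W₁_eq {x y : V} {A : G.Walk L.γ x} {M : G.Walk x y}
    {B : G.Walk y L.δ} (hW : L.W₁ = A.append (M.append B)) (hxy : G.Adj x y)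
    (h₁ : s(x, y) ∉ L.W₁.edges) (h₂ : s(x, y) ∉ L.W₂.edges) :
    ∃ L' : Lens G s t v, L'.size < L.size := by
  have hM : 2 ≤ M.length :=
    two_le_length_of_notMem_edges hxy fun h => h₁ (by simp [hW, edges_append, h])
  have hP := L.isPath
  rw [hW] at hP
  have hsize : L.size = A.length + M.length + B.length + L.W₂.length := by
    simp only [size, hW, length_append]
    omega
  by_cases hvM : v ∈ M.support ∧ v ≠ x ∧ v ≠ y
  · refine ⟨⟨L.P₁.append A, M, B.append L.P₂, hxy.toWalk, by simpa [append_assoc] using hP,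
      hxy.isPath_toWalk, fun z hz _ => by simpa using hz, hvM.1, hvM.2.1, hvM.2.2⟩, ?_⟩
    have : 2 ≤ A.length + B.length + L.W₂.length := by
      by_contra! hlt
      have := L.one_le_length_W₂
      rw [← eq_of_length_eq_zero (p := A) (by omega), eq_of_length_eq_zero (p := B) (by omega)]
        at h₂
      exact h₂ (mem_edges_of_length_eq_one (by omega))
    show M.length + hxy.toWalk.length < L.size
    rw [hxy.length_toWalk]
    omega
  · have hv : v ∈ (A.append (cons hxy B)).support := by
      have := L.mem_W₁
      simp only [hW, mem_support_append_iff, support_cons, List.mem_cons] at this ⊢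
      grind [end_mem_support, start_mem_support]
    have hsub := support_shortcut_subset A M B hxy
    rw [← hW] at hsub
    refine ⟨⟨L.P₁, A.append (cons hxy B), L.P₂, L.W₂,
      L.isPath.append_append_of_support_subset (hP.of_append_right.of_append_left.shortcut hxy)
        hsub,
      L.isPath_W₂, fun z hz hzP => L.eq_of_mem_W₂ z hz (support_append_append_subset _ _ hsub hzP),
      hv, L.ne_start, L.ne_end⟩, ?_⟩
    show (A.append (cons hxy B)).length + L.W₂.length < L.size
    simp only [length_append, length_cons]
    omega

theorem exists_size_lt_of_W₂_eq {x y : V} {C : G.Walk L.γ x} {M : G.Walk x y}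
    {D : G.Walk y L.δ} (hW : L.W₂ = C.append (M.append D)) (hxy : G.Adj x y)
    (h₂ : s(x, y) ∉ L.W₂.edges) : ∃ L' : Lens G s t v, L'.size < L.size := by
  have hM : 2 ≤ M.length :=
    two_le_length_of_notMem_edges hxy fun h => h₂ (by simp [hW, edges_append, h])
  have hsub := support_shortcut_subset C M D hxy
  rw [← hW] at hsub
  refine ⟨⟨L.P₁, L.W₁, L.P₂, C.append (cons hxy D), L.isPath,
    (hW ▸ L.isPath_W₂).shortcut hxy, fun z hz => L.eq_of_mem_W₂ z (hsub hz),
    L.mem_W₁, L.ne_start, L.ne_end⟩, ?_⟩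
  show L.W₁.length + (C.append (cons hxy D)).length < L.size
  simp only [size, hW, length_append, length_cons]
  omega

theorem exists_size_lt_of_self_adj {y : V} {A : G.Walk L.γ v} {B : G.Walk v L.δ}
    {C : G.Walk L.γ y} {D : G.Walk y L.δ} (hW₁ : L.W₁ = A.append B) (hW₂ : L.W₂ = C.append D)
    (hvy : G.Adj v y) (hy : y ∉ L.W₁.support) : ∃ L' : Lens G s t v, L'.size < L.size := by
  have hP := L.isPath
  have hW₂P := L.eq_of_mem_W₂
  have hCD := L.isPath_W₂
  have hyδ : y ≠ L.δ := fun h => hy (h ▸ L.W₁.end_mem_support)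
  rw [hW₁] at hP hW₂P hy
  rw [hW₂] at hW₂P hCD
  simp only [isPath_append_iff, mem_support_append_iff] at hP hCD hW₂P hy
  have hγδ := L.start_ne_end
  have hvγ := L.ne_start
  have hvδ := L.ne_end
  -- Reroute through the chord `v y` and the part `D` of `W₂`, which meets the old path only at `δ`.
  have hnew : (L.P₁.append ((A.concat hvy).append (D.append L.P₂))).IsPath := by
    rw [concat_append]
    simp only [isPath_append_iff, cons_isPath_iff, mem_support_append_iff, support_cons,
      List.mem_cons]
    grind [start_mem_support, end_mem_support]
  refine ⟨⟨L.P₁, A.concat hvy, D.append L.P₂, C, hnew, hCD.1, fun z hzC hz => ?_,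
    by simp, hvγ, hvy.ne⟩, ?_⟩
  · rw [concat_append] at hz
    simp only [mem_support_append_iff, support_cons, List.mem_cons] at hz
    grind [start_mem_support, end_mem_support]
  · have hB := B.length_pos_of_ne hvδ
    have hD := D.length_pos_of_ne hyδ
    show (A.concat hvy).length + C.length < L.size
    simp only [size, hW₁, hW₂, length_concat, length_append]
    omega

theorem exists_size_lt_of_adj_of_mem_left {x y : V} {A : G.Walk L.γ x} {B : G.Walk x L.δ}
    {C : G.Walk L.γ y} {D : G.Walk y L.δ} (hW₁ : L.W₁ = A.append B) (hW₂ : L.W₂ = C.append D)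
    (hxy : G.Adj x y) (hx : x ∉ L.W₂.support) (hy : y ∉ L.W₁.support) (hvA : v ∈ A.support)
    (hvx : v ≠ x) : ∃ L' : Lens G s t v, L'.size < L.size := by
  have hP := L.isPath
  have hW₂P := L.eq_of_mem_W₂
  have hCD := L.isPath_W₂
  have hxδ : x ≠ L.δ := fun h => hx (h ▸ L.W₂.end_mem_support)
  have hyδ : y ≠ L.δ := fun h => hy (h ▸ L.W₁.end_mem_support)
  rw [hW₁] at hP hW₂P hy
  rw [hW₂] at hW₂P hCD hx
  simp only [isPath_append_iff, mem_support_append_iff] at hCD hW₂P hx hy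
  refine ⟨⟨L.P₁, A, B.append L.P₂, C.concat hxy.symm, by simpa [append_assoc] using hP,
    (concat_isPath_iff _).2 ⟨hCD.1, fun h => hx (Or.inl h)⟩, fun z hzC hz => ?_, hvA,
    L.ne_start, hvx⟩, ?_⟩
  · simp only [support_concat, List.mem_append, List.mem_singleton,
      mem_support_append_iff] at hzC hz
    grind [start_mem_support, end_mem_support]
  · have hB := B.length_pos_of_ne hxδ
    have hD := D.length_pos_of_ne hyδ
    show A.length + (C.concat hxy.symm).length < L.size
    simp only [size, hW₁, hW₂, length_concat, length_append]
    omega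

theorem exists_size_lt_of_adj {x y : V} (hxy : G.Adj x y) (hx₁ : x ∈ L.W₁.support)
    (hx₂ : x ∉ L.W₂.support) (hy₂ : y ∈ L.W₂.support) (hy₁ : y ∉ L.W₁.support) :
    ∃ L' : Lens G s t v, L'.size < L.size := by
  obtain ⟨A, B, hW₁⟩ := mem_support_iff_exists_append.1 hx₁
  obtain ⟨C, D, hW₂⟩ := mem_support_iff_exists_append.1 hy₂
  by_cases hvx : v = x
  · subst hvx
    exact L.exists_size_lt_of_self_adj hW₁ hW₂ hxy hy₁
  have hv := L.mem_W₁
  rw [hW₁, mem_support_append_iff] at hv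
  rcases hv with hvA | hvB
  · exact L.exists_size_lt_of_adj_of_mem_left hW₁ hW₂ hxy hx₂ hy₁ hvA hvx
  · replace hvB : v ∈ B.reverse.support := by simpa using hvB
    obtain ⟨L', hL'⟩ := L.reverse.exists_size_lt_of_adj_of_mem_left (A := B.reverse)
      (B := A.reverse) (C := D.reverse) (D := C.reverse)
      (by simp [reverse, hW₁, reverse_append]) (by simp [reverse, hW₂, reverse_append]) hxy
      (by simpa [reverse] using hx₂) (by simpa [reverse] using hy₁) hvB hvx
    exact ⟨L'.reverse, by rwa [size_reverse, ← L.size_reverse]⟩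

theorem exists_size_lt (hch : IsChordal G) (h : 4 ≤ L.size) :
    ∃ L' : Lens G s t v, L'.size < L.size := by
  obtain ⟨x, hx, y, hy, hxy, hxyC⟩ :=
    hch L.γ _ L.isCycle (by simpa [size, length_append] using h)
  simp only [mem_support_append_iff, support_reverse, List.mem_reverse] at hx hy
  simp only [edges_append, edges_reverse, List.mem_append, List.mem_reverse, not_or] at hxyC
  by_cases h₁ : x ∈ L.W₁.support ∧ y ∈ L.W₁.support
  · rcases exists_append_append_of_mem_support h₁.1 h₁.2 with ⟨A, M, B, hW⟩ | ⟨A, M, B, hW⟩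
    · exact L.exists_size_lt_of_W₁_eq hW hxy hxyC.1 hxyC.2
    · rw [Sym2.eq_swap] at hxyC
      exact L.exists_size_lt_of_W₁_eq hW hxy.symm hxyC.1 hxyC.2
  by_cases h₂ : x ∈ L.W₂.support ∧ y ∈ L.W₂.support
  · rcases exists_append_append_of_mem_support h₂.1 h₂.2 with ⟨C, M, D, hW⟩ | ⟨C, M, D, hW⟩
    · exact L.exists_size_lt_of_W₂_eq hW hxy hxyC.2
    · rw [Sym2.eq_swap] at hxyC
      exact L.exists_size_lt_of_W₂_eq hW hxy.symm hxyC.2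
  by_cases hx₁ : x ∈ L.W₁.support
  · exact L.exists_size_lt_of_adj hxy hx₁ (by tauto) (by tauto) (by tauto)
  · exact L.exists_size_lt_of_adj hxy.symm (by tauto) (by tauto) (by tauto) hx₁

end Lens

theorem Lens.mem_forcedSet (hch : IsChordal G) (L : Lens G s t v) : v ∈ forcedSet G s t := by
  induction h : L.size using Nat.strong_induction_on generalizing L with
  | _ n ih =>
    rcases le_or_gt L.size 3 with h3 | h4
    · exact L.mem_forcedSet_of_size_le_three h3
    · obtain ⟨L', hL'⟩ := L.exists_size_lt hch h4
      exact ih _ (h ▸ hL') L' rfl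

theorem Lens.nonempty_of_notMem_support {p r : G.Walk s t} (hp : p.IsPath)
    (hvp : v ∈ p.support) (hvr : v ∉ r.support) : Nonempty (Lens G s t v) := by
  classical
  obtain ⟨A, B, rfl⟩ := mem_support_iff_exists_append.1 hvp
  obtain ⟨γ, hγ, δ, hδ, W, hsub, hW⟩ := r.exists_walk_between (X := {z | z ∈ A.support})
    (Y := {z | z ∈ B.support}) A.start_mem_support B.end_mem_support
  obtain ⟨P₁, A₂, rfl⟩ := mem_support_iff_exists_append.1 hγ
  obtain ⟨B₁, P₂, rfl⟩ := mem_support_iff_exists_append.1 hδ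
  refine ⟨⟨P₁, A₂.append B₁, P₂, W.bypass, by simpa [append_assoc] using hp, W.bypass_isPath,
    fun z hz hzP => hW z (W.support_bypass_subset_support hz) ?_, by simp,
    fun h => hvr (hsub (h ▸ W.start_mem_support)),
    fun h => hvr (hsub (h ▸ W.end_mem_support))⟩⟩
  simp only [mem_support_append_iff, Set.mem_ofPred_eq] at hzP ⊢
  tauto

theorem mem_forcedSet_of_mem_support_of_notMem_support (hch : IsChordal G) {p r : G.Walk s t}
    (hp : p.IsPath) (hvp : v ∈ p.support) (hvr : v ∉ r.support) : v ∈ forcedSet G s t :=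
  (Lens.nonempty_of_notMem_support hp hvp hvr).some.mem_forcedSet hch

end SimpleGraph

theorem stmt3_general {V : Type} (G : SimpleGraph V) (s t : V)
    (hchordal : IsChordal G) (hred : Reduced G s t) :
    IsTrackingSet G s t (forcedSet G s t) := by
  refine isTrackingSet_of_forall_mem_support fun x hx r => ?_
  by_contra hxr
  obtain ⟨p, hp, hxp⟩ := hred.1 x
  exact hx (mem_forcedSet_of_mem_support_of_notMem_support hchordal hp hxp hxr)

theorem stmt3 {V : Type} [Fintype V] (G : SimpleGraph V) (s t : V)
    (hchordal : IsChordal G) (hred : Reduced G s t) :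
    IsTrackingSet G s t (forcedSet G s t) :=
  stmt3_general G s t hchordal hred
end

section
/- In a directed graph (tournament) G with source s and sink t, if two distinct s-t paths P1 and P2 have the same sequence of trackers with respect to a vertex set T, then G contains a monotone cycle: two internally vertex-disjoint directed paths from some vertex u to some vertex v, with no internal vertex of either path contained in T. -/
/-- A directed walk from `s` to `t` in the digraph given by the arc relation `A`,
recorded as its list of vertices. -/
def IsDiwalk {V : Type} (A : V → V → Prop) (s t : V) (l : List V) : Prop :=
  l ≠ [] ∧ l.Chain' A ∧ l.head? = some s ∧ l.getLast? = some t

/-- A simple directed path from `s` to `t`. -/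
def IsDipath {V : Type} (A : V → V → Prop) (s t : V) (l : List V) : Prop :=
  IsDiwalk A s t l ∧ l.Nodup

/-- A tournament: no self-loops and exactly one arc between any two distinct vertices. -/
def IsTournament {V : Type} (A : V → V → Prop) : Prop :=
  (∀ v, ¬ A v v) ∧ (∀ u v : V, u ≠ v → (A u v ↔ ¬ A v u))

/-- The walk `l` uses the arc `(a, b)`. -/
def ArcIn {V : Type} (a b : V) (l : List V) : Prop :=
  ∃ l1 l2 : List V, l = l1 ++ a :: b :: l2

/-- `T` is a tracking set for directed `s`-`t` paths. -/
def IsDiTrackingSet {V : Type} (A : V → V → Prop) (s t : V) (T : Set V) : Prop :=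
  ∀ p q : List V, IsDipath A s t p → IsDipath A s t q →
    trackSeq T p = trackSeq T q → p = q

/-!
Two distinct `s`-`t` paths agree up to a vertex `u` at which they branch. Their tracker sequences
after `u` still agree, so both continuations first meet the same vertex `w`: their first tracker, or
`t` if they have none, and neither contains a tracker before it. Following the first `u`-`w` path
until it first meets a vertex of the second one then gives two internally disjoint paths with no
tracker inside.
-/

section Lists

variable {V : Type}

lemma exists_eq_append_cons_of_ne_of_head?_eq :
    ∀ p q : List V, p ≠ q → p.head? = q.head? →
      ∃ c u l1 l2, p = c ++ u :: l1 ∧ q = c ++ u :: l2 ∧ l1.head? ≠ l2.head?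
  | [], [], hne, _ => absurd rfl hne
  | [], _ :: _, _, hh | _ :: _, [], _, hh => by simp at hh
  | a :: p, b :: q, hne, hh => by
    obtain rfl : a = b := by simpa using hh
    by_cases h : p.head? = q.head?
    · obtain ⟨c, u, l1, l2, rfl, rfl, hne'⟩ :=
        exists_eq_append_cons_of_ne_of_head?_eq p q (fun e => hne (e ▸ rfl)) h
      exact ⟨a :: c, u, l1, l2, rfl, rfl, hne'⟩
    · exact ⟨[], a, p, q, rfl, rfl, h⟩

lemma head?_append_singleton_eq (b : List V) (c : V) (s : List V) :
    (b ++ [c]).head? = (b ++ c :: s).head? := by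
  cases b <;> rfl

end Lists

section Trackers

variable {V : Type} (T : Set V)

lemma trackSeq_append (l1 l2 : List V) :
    trackSeq T (l1 ++ l2) = trackSeq T l1 ++ trackSeq T l2 :=
  List.filter_append ..

lemma trackSeq_append_left_inj (p : List V) {l1 l2 : List V} :
    trackSeq T (p ++ l1) = trackSeq T (p ++ l2) ↔ trackSeq T l1 = trackSeq T l2 := by
  simp only [trackSeq_append, List.append_cancel_left_eq]

lemma exists_eq_append_cons_headD_trackSeq {t : V} {l : List V} (ht : l.getLast? = some t) :
    ∃ b r, l = b ++ (trackSeq T l).headD t :: r ∧ ∀ x ∈ b, x ∉ T := by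
  rcases h : trackSeq T l with _ | ⟨c, rest⟩
  · refine ⟨l.dropLast, [], (List.dropLast_append_getLast? t ht).symm, fun x hx hxT => ?_⟩
    have := List.filter_eq_nil_iff.mp h x (List.mem_of_mem_dropLast hx)
    simp_all
  · have hfind : l.find? (fun v => @decide (v ∈ T) (Classical.propDecidable _)) = some c := by
      rw [← List.head?_filter]; exact congrArg List.head? h
    obtain ⟨-, b, r, rfl, hb⟩ := List.find?_eq_some_iff_append.mp hfind
    exact ⟨b, r, rfl, fun x hx => by simpa using hb x hx⟩

end Trackers

namespace IsDipath

variable {V : Type} {A : V → V → Prop} {s t v : V} {l r : List V}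

lemma append_cons_prefix (h : IsDipath A s t (l ++ v :: r)) : IsDipath A s v (l ++ [v]) := by
  have hpre : l ++ [v] <+: l ++ v :: r := ⟨r, by simp⟩
  obtain ⟨⟨-, hc, hs, -⟩, hnd⟩ := h
  refine ⟨⟨by simp, hc.prefix hpre, ?_, List.getLast?_concat⟩, hnd.sublist hpre.sublist⟩
  rwa [head?_append_singleton_eq]

lemma append_cons_suffix (h : IsDipath A s t (l ++ v :: r)) : IsDipath A v t (v :: r) := by
  obtain ⟨⟨-, hc, -, ht⟩, hnd⟩ := h
  refine ⟨⟨by simp, hc.suffix ⟨l, rfl⟩, rfl, ?_⟩, hnd.sublist (List.sublist_append_right _ _)⟩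
  rwa [List.getLast?_append_of_ne_nil _ (by simp)] at ht

lemma getLast?_tail_of_head?_ne {u : V} {l1 l2 : List V}
    (h1 : IsDipath A u t (u :: l1)) (h2 : IsDipath A u t (u :: l2))
    (hne : l1.head? ≠ l2.head?) : l1.getLast? = some t := by
  rcases l1 with _ | ⟨a, l1⟩
  · obtain rfl : u = t := by simpa using h1.1.2.2.2
    rcases l2 with _ | ⟨b, l2⟩
    · exact absurd rfl hne
    · have hu : u ∈ b :: l2 := List.mem_of_getLast? (by simpa using h2.1.2.2.2)
      exact absurd hu (List.nodup_cons.mp h2.2).1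
  · simpa using h1.1.2.2.2

variable {u w : V} {b1 b2 : List V}

lemma exists_internally_disjoint (h1 : IsDipath A u w (u :: (b1 ++ [w])))
    (h2 : IsDipath A u w (u :: (b2 ++ [w]))) (hne : (b1 ++ [w]).head? ≠ (b2 ++ [w]).head?) :
    ∃ v, u ≠ v ∧ ∃ Q1 Q2 : List V,
      IsDipath A u v Q1 ∧ IsDipath A u v Q2 ∧ Q1 ≠ Q2 ∧
      (∀ x ∈ Q1.tail.dropLast, x ∉ Q2.tail.dropLast) ∧
      Q1.tail.dropLast ⊆ b1 ∧ Q2.tail.dropLast ⊆ b2 := by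
  classical
  obtain ⟨v, hv⟩ : ∃ v, (b1 ++ [w]).find? (· ∈ b2 ++ [w]) = some v :=
    Option.isSome_iff_exists.mp (List.find?_isSome.mpr ⟨w, by simp, by simp⟩)
  obtain ⟨hv2, p1, s1, e1, hp1⟩ := List.find?_eq_some_iff_append.mp hv
  obtain ⟨p2, s2, e2⟩ := List.mem_iff_append.mp (of_decide_eq_true hv2)
  have hQ1 : IsDipath A u v (u :: (p1 ++ [v])) :=
    append_cons_prefix (l := u :: p1) (r := s1) (by simpa [e1] using h1)
  have hQ2 : IsDipath A u v (u :: (p2 ++ [v])) :=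
    append_cons_prefix (l := u :: p2) (r := s2) (by simpa [e2] using h2)
  refine ⟨v, fun huv => (List.nodup_cons.mp hQ1.2).1 (by simp [huv]), _, _, hQ1, hQ2, ?_, ?_, ?_, ?_⟩
  · intro hQ
    apply hne
    rw [e1, e2, ← head?_append_singleton_eq, ← head?_append_singleton_eq]
    simpa using congrArg (List.head? ∘ List.tail) hQ
  · intro x hx1 hx2
    simp only [List.tail_cons, List.dropLast_concat] at hx1 hx2
    exact absurd (e2 ▸ List.mem_append_left _ hx2) (by simpa using hp1 x hx1)
  · intro x hx
    simp only [List.tail_cons, List.dropLast_concat] at hx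
    rw [← List.dropLast_concat (l₁ := b1) (b := w), e1, List.dropLast_append_of_ne_nil (by simp)]
    exact List.mem_append_left _ hx
  · intro x hx
    simp only [List.tail_cons, List.dropLast_concat] at hx
    rw [← List.dropLast_concat (l₁ := b2) (b := w), e2, List.dropLast_append_of_ne_nil (by simp)]
    exact List.mem_append_left _ hx

end IsDipath

theorem stmt5_general {V : Type} (A : V → V → Prop)
    (s t : V) (T : Set V) (P1 P2 : List V)
    (h1 : IsDipath A s t P1) (h2 : IsDipath A s t P2) (hne : P1 ≠ P2)
    (hseq : trackSeq T P1 = trackSeq T P2) :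
    ∃ u v : V, u ≠ v ∧ ∃ Q1 Q2 : List V,
      IsDipath A u v Q1 ∧ IsDipath A u v Q2 ∧ Q1 ≠ Q2 ∧
      (∀ x ∈ Q1.tail.dropLast, x ∉ Q2.tail.dropLast) ∧
      (∀ x ∈ Q1.tail.dropLast, x ∉ T) ∧
      (∀ x ∈ Q2.tail.dropLast, x ∉ T) := by
  obtain ⟨c, u, l1, l2, rfl, rfl, hbranch⟩ :=
    exists_eq_append_cons_of_ne_of_head?_eq P1 P2 hne (h1.1.2.2.1.trans h2.1.2.2.1.symm)
  have S1 := h1.append_cons_suffix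
  have S2 := h2.append_cons_suffix
  have hseq' : trackSeq T l1 = trackSeq T l2 := by
    rwa [List.append_cons c u l1, List.append_cons c u l2, trackSeq_append_left_inj] at hseq
  obtain ⟨b1, r1, e1, hb1⟩ :=
    exists_eq_append_cons_headD_trackSeq T (S1.getLast?_tail_of_head?_ne S2 hbranch)
  obtain ⟨b2, r2, e2, hb2⟩ :=
    exists_eq_append_cons_headD_trackSeq T (S2.getLast?_tail_of_head?_ne S1 hbranch.symm)
  rw [← hseq'] at e2
  set w := (trackSeq T l1).headD t
  have R1 : IsDipath A u w (u :: (b1 ++ [w])) :=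
    IsDipath.append_cons_prefix (l := u :: b1) (r := r1) (by rwa [e1] at S1)
  have R2 : IsDipath A u w (u :: (b2 ++ [w])) :=
    IsDipath.append_cons_prefix (l := u :: b2) (r := r2) (by rwa [e2] at S2)
  have hne' : (b1 ++ [w]).head? ≠ (b2 ++ [w]).head? := by
    rwa [head?_append_singleton_eq b1 w r1, head?_append_singleton_eq b2 w r2, ← e1, ← e2]
  obtain ⟨v, huv, Q1, Q2, hQ1, hQ2, hQ, hdisj, hsub1, hsub2⟩ := R1.exists_internally_disjoint R2 hne'
  exact ⟨u, v, huv, Q1, Q2, hQ1, hQ2, hQ, hdisj, fun x hx => hb1 x (hsub1 hx),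
    fun x hx => hb2 x (hsub2 hx)⟩

theorem stmt5 {V : Type} [Fintype V] (A : V → V → Prop) (hirr : ∀ v, ¬ A v v)
    (s t : V) (T : Set V) (P1 P2 : List V)
    (h1 : IsDipath A s t P1) (h2 : IsDipath A s t P2) (hne : P1 ≠ P2)
    (hseq : trackSeq T P1 = trackSeq T P2) :
    ∃ u v : V, u ≠ v ∧ ∃ Q1 Q2 : List V,
      IsDipath A u v Q1 ∧ IsDipath A u v Q2 ∧ Q1 ≠ Q2 ∧
      (∀ x ∈ Q1.tail.dropLast, x ∉ Q2.tail.dropLast) ∧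
      (∀ x ∈ Q1.tail.dropLast, x ∉ T) ∧
      (∀ x ∈ Q2.tail.dropLast, x ∉ T) :=
  stmt5_general A s t T P1 P2 h1 h2 hne hseq
end

section
/- Let G be a tournament with source s and sink t, let e = (a,b) be an arc, and let x be a vertex with arcs (a,x) and (x,b). If there exists a directed s-t path P in G - x that uses arc e, then every tracking set of G contains x. -/
/-!
If `x ∉ T`, splice `x` into the path `P` between `a` and `b`: since `x ∉ P` and
`a → x → b`, the result is again an `s`-`t` path, and it has the same `T`-sequence as `P`.
A tracking set would then force the two paths to coincide, but only one of them visits `x`.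
-/

namespace List

variable {V : Type} {A : V → V → Prop} {a b x : V} {l₁ l₂ : List V}

theorem IsChain.insert_between (h : IsChain A (l₁ ++ a :: b :: l₂)) (hax : A a x)
    (hxb : A x b) : IsChain A (l₁ ++ a :: x :: b :: l₂) := by
  rw [isChain_append, isChain_cons_cons] at h ⊢
  obtain ⟨h₁, ⟨-, hb⟩, hjoin⟩ := h
  exact ⟨h₁, ⟨hax, isChain_cons_cons.2 ⟨hxb, hb⟩⟩, hjoin⟩

theorem Nodup.insert_between (h : Nodup (l₁ ++ a :: b :: l₂)) (hx : x ∉ l₁ ++ a :: b :: l₂) :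
    Nodup (l₁ ++ a :: x :: b :: l₂) := by
  have hsplit : ∀ l : List V, l₁ ++ a :: l = (l₁ ++ [a]) ++ l := by simp
  rw [hsplit, nodup_middle, ← hsplit]
  exact nodup_cons.2 ⟨hx, h⟩

end List

theorem IsDipath.insert_between {V : Type} {A : V → V → Prop} {s t a b x : V}
    {l₁ l₂ : List V} (hP : IsDipath A s t (l₁ ++ a :: b :: l₂)) (hx : x ∉ l₁ ++ a :: b :: l₂)
    (hax : A a x) (hxb : A x b) : IsDipath A s t (l₁ ++ a :: x :: b :: l₂) := by
  obtain ⟨⟨-, hchain, hhead, hlast⟩, hnodup⟩ := hP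
  refine ⟨⟨by simp, hchain.insert_between hax hxb, ?_, ?_⟩, hnodup.insert_between hx⟩
  · simpa [List.head?_append] using hhead
  · simpa [List.getLast?_append] using hlast

theorem trackSeq_insert_of_notMem {V : Type} {T : Set V} {x : V} (hx : x ∉ T)
    (l₁ l₂ : List V) : trackSeq T (l₁ ++ x :: l₂) = trackSeq T (l₁ ++ l₂) := by
  simp [trackSeq, List.filter_append, hx]

theorem stmt6_general {V : Type} (A : V → V → Prop)
    (s t a b x : V) (hax : A a x) (hxb : A x b)
    (hP : ∃ l : List V, IsDipath A s t l ∧ x ∉ l ∧ ArcIn a b l) :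
    ∀ T : Set V, IsDiTrackingSet A s t T → x ∈ T := by
  intro T hT
  by_contra hxT
  obtain ⟨_, hpath, hxl, l₁, l₂, rfl⟩ := hP
  have hsame : trackSeq T (l₁ ++ a :: b :: l₂) = trackSeq T (l₁ ++ a :: x :: b :: l₂) := by
    simpa using (trackSeq_insert_of_notMem hxT (l₁ ++ [a]) (b :: l₂)).symm
  have hpaths := hT _ _ hpath (hpath.insert_between hxl hax hxb) hsame
  exact hxl (hpaths ▸ by simp)

theorem stmt6 {V : Type} [Fintype V] (A : V → V → Prop) (htour : IsTournament A)
    (s t a b x : V) (hab : A a b) (hax : A a x) (hxb : A x b)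
    (hP : ∃ l : List V, IsDipath A s t l ∧ x ∉ l ∧ ArcIn a b l) :
    ∀ T : Set V, IsDiTrackingSet A s t T → x ∈ T :=
  stmt6_general A s t a b x hax hxb hP
end

section
/- For a reduced undirected s-t graph G (every vertex and edge lies on an s-t path, parallel edges allowed), every tracking edge set T ⊆ E contains at least one edge of every cycle of G; i.e., every tracking edge set is a feedback edge set. -/
/-- An undirected multigraph: a type of edges together with an endpoints map
(parallel edges and loops are allowed). -/
structure Multigraph (V E : Type) where
  ends : E → Sym2 V

namespace Multigraph

variable {V E : Type}

/-- Walks in a multigraph. -/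
inductive MWalk (M : Multigraph V E) : V → V → Type
  | nil (v : V) : MWalk M v v
  | cons {u v w : V} (e : E) (h : M.ends e = s(u, v)) (p : MWalk M v w) : MWalk M u w

variable {M : Multigraph V E}

def MWalk.support : ∀ {u v : V}, MWalk M u v → List V
  | _, _, MWalk.nil v => [v]
  | u, _, MWalk.cons _ _ p => u :: p.support

def MWalk.edgeList : ∀ {u v : V}, MWalk M u v → List E
  | _, _, MWalk.nil _ => []
  | _, _, MWalk.cons e _ p => e :: p.edgeList

/-- A simple path: no repeated vertices. -/
def MWalk.IsMPath {u v : V} (p : MWalk M u v) : Prop := p.support.Nodup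

/-- A cycle: a nonempty closed walk with no repeated edges and no repeated
vertices except the base vertex. -/
def MWalk.IsMCycle {v : V} (c : MWalk M v v) : Prop :=
  c.edgeList ≠ [] ∧ c.edgeList.Nodup ∧ c.support.tail.Nodup

end Multigraph

open Multigraph

noncomputable def etrackSeq {E : Type} (T : Set E) (l : List E) : List E :=
  l.filter (fun e => @decide (e ∈ T) (Classical.propDecidable _))

/-- `T` is a tracking edge set: distinct `s`-`t` paths have distinct sequences of
`T`-edges along them. -/
def IsTrackingEdgeSet {V E : Type} (M : Multigraph V E) (s t : V) (T : Set E) : Prop :=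
  ∀ p q : MWalk M s t, p.IsMPath → q.IsMPath →
    etrackSeq T p.edgeList = etrackSeq T q.edgeList → p = q

/-- Every vertex and edge lies on some `s`-`t` path. -/
def MReduced {V E : Type} (M : Multigraph V E) (s t : V) : Prop :=
  (∀ v : V, ∃ p : MWalk M s t, p.IsMPath ∧ v ∈ p.support) ∧
  (∀ e : E, ∃ p : MWalk M s t, p.IsMPath ∧ e ∈ p.edgeList)

/-!
Suppose a cycle `C` contains no edge of `T`. Pick an edge of `C` and an `s`-`t` path `P` through it.
Then `P` meets `C` in two distinct vertices; let `a` be the first and `b` the last of them. The two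
arcs of `C` between `a` and `b` are edge-disjoint paths free of `T`-edges, and splicing either of
them in place of the middle part of `P` gives two distinct `s`-`t` paths with the same sequence of
`T`-edges.
-/

namespace Multigraph

variable {V E : Type} {M : Multigraph V E}

namespace MWalk

def append : ∀ {u v w : V}, MWalk M u v → MWalk M v w → MWalk M u w
  | _, _, _, nil _, q => q
  | _, _, _, cons e h p, q => cons e h (p.append q)

def reverse : ∀ {u v : V}, MWalk M u v → MWalk M v u
  | _, _, nil v => nil v
  | _, _, cons e h p => p.reverse.append (cons e (h.trans Sym2.eq_swap) (nil _))

variable {u v w a b : V}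

lemma support_eq_cons : ∀ {u v : V} (p : MWalk M u v), p.support = u :: p.support.tail
  | _, _, nil _ => rfl
  | _, _, cons _ _ _ => rfl

lemma start_mem_support (p : MWalk M u v) : u ∈ p.support :=
  p.support_eq_cons ▸ List.mem_cons_self

lemma end_mem_support : ∀ {u v : V} (p : MWalk M u v), v ∈ p.support
  | _, _, nil v => List.mem_singleton_self v
  | _, _, cons _ _ p => List.mem_cons_of_mem _ p.end_mem_support

lemma end_mem_support_tail : ∀ {u v : V} (p : MWalk M u v), u ≠ v → v ∈ p.support.tail
  | _, _, nil _, h => absurd rfl h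
  | _, _, cons _ _ p, _ => p.end_mem_support

lemma edgeList_ne_nil : ∀ {u v : V} (p : MWalk M u v), u ≠ v → p.edgeList ≠ []
  | _, _, nil _, h => absurd rfl h
  | _, _, cons _ _ _, _ => List.cons_ne_nil _ _

lemma support_append : ∀ {u v w : V} (p : MWalk M u v) (q : MWalk M v w),
    (p.append q).support = p.support ++ q.support.tail
  | _, _, _, nil _, q => q.support_eq_cons
  | _, _, _, cons _ _ p, q => congrArg (_ :: ·) (p.support_append q)

lemma support_tail_append (p : MWalk M u v) (q : MWalk M v w) :
    (p.append q).support.tail = p.support.tail ++ q.support.tail := by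
  rw [support_append, p.support_eq_cons, List.cons_append, List.tail_cons, List.tail_cons]

lemma mem_support_append {x : V} (p : MWalk M u v) (q : MWalk M v w) :
    x ∈ (p.append q).support ↔ x ∈ p.support ∨ x ∈ q.support := by
  rw [support_append, List.mem_append]
  conv_rhs => rw [q.support_eq_cons, List.mem_cons]
  constructor
  · rintro (h | h)
    exacts [.inl h, .inr (.inr h)]
  · rintro (h | rfl | h)
    exacts [.inl h, .inl p.end_mem_support, .inr h]

lemma edgeList_append : ∀ {u v w : V} (p : MWalk M u v) (q : MWalk M v w),
    (p.append q).edgeList = p.edgeList ++ q.edgeList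
  | _, _, _, nil _, _ => rfl
  | _, _, _, cons e _ p, q => congrArg (e :: ·) (p.edgeList_append q)

lemma support_reverse : ∀ {u v : V} (p : MWalk M u v), p.reverse.support = p.support.reverse
  | _, _, nil _ => rfl
  | _, _, cons _ _ p => by
    simp [reverse, support, support_append, p.support_reverse]

lemma edgeList_reverse : ∀ {u v : V} (p : MWalk M u v), p.reverse.edgeList = p.edgeList.reverse
  | _, _, nil _ => rfl
  | _, _, cons _ _ p => by
    simp [reverse, edgeList, edgeList_append, p.edgeList_reverse]

lemma mem_support_of_mem_edgeList {e : E} {x y : V} :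
    ∀ {u v : V} (p : MWalk M u v), e ∈ p.edgeList → M.ends e = s(x, y) →
      x ∈ p.support ∧ y ∈ p.support
  | _, _, nil _, he, _ => absurd he List.not_mem_nil
  | _, _, cons f hf p, he, hxy => by
    rcases List.mem_cons.mp he with rfl | he
    · rw [hxy, Sym2.eq_iff] at hf
      rcases hf with ⟨rfl, rfl⟩ | ⟨rfl, rfl⟩
      · exact ⟨List.mem_cons_self, List.mem_cons_of_mem _ p.start_mem_support⟩
      · exact ⟨List.mem_cons_of_mem _ p.start_mem_support, List.mem_cons_self⟩
    · obtain ⟨hx, hy⟩ := p.mem_support_of_mem_edgeList he hxy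
      exact ⟨List.mem_cons_of_mem _ hx, List.mem_cons_of_mem _ hy⟩

lemma exists_eq_append_first_mem (S : Set V) :
    ∀ {u v : V} (p : MWalk M u v), (∃ x ∈ p.support, x ∈ S) →
      ∃ a ∈ S, ∃ (p₁ : MWalk M u a) (p₂ : MWalk M a v),
        p = p₁.append p₂ ∧ ∀ x ∈ p₁.support, x ∈ S → x = a
  | _, _, nil v, hS => by
    obtain ⟨x, hx, hxS⟩ := hS
    obtain rfl := List.mem_singleton.mp hx
    exact ⟨x, hxS, nil x, nil x, rfl, fun y hy _ => List.mem_singleton.mp hy⟩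
  | u, _, cons e h p, hS => by
    by_cases hu : u ∈ S
    · exact ⟨u, hu, nil u, cons e h p, rfl, fun y hy _ => List.mem_singleton.mp hy⟩
    obtain ⟨x, hx, hxS⟩ := hS
    have hxp : x ∈ p.support := (List.mem_cons.mp hx).resolve_left (by rintro rfl; exact hu hxS)
    obtain ⟨a, haS, p₁, p₂, rfl, hp₁⟩ := p.exists_eq_append_first_mem S ⟨x, hxp, hxS⟩
    refine ⟨a, haS, cons e h p₁, p₂, rfl, fun y hy hyS => hp₁ y ?_ hyS⟩
    exact (List.mem_cons.mp hy).resolve_left (by rintro rfl; exact hu hyS)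

lemma exists_eq_append_last_mem (S : Set V) :
    ∀ {u v : V} (p : MWalk M u v), (∃ x ∈ p.support, x ∈ S) →
      ∃ b ∈ S, ∃ (p₁ : MWalk M u b) (p₂ : MWalk M b v),
        p = p₁.append p₂ ∧ ∀ x ∈ p₂.support, x ∈ S → x = b
  | _, _, nil v, hS => by
    obtain ⟨x, hx, hxS⟩ := hS
    obtain rfl := List.mem_singleton.mp hx
    exact ⟨x, hxS, nil x, nil x, rfl, fun y hy _ => List.mem_singleton.mp hy⟩
  | u, _, cons e h p, hS => by
    by_cases hp : ∃ x ∈ p.support, x ∈ S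
    · obtain ⟨b, hbS, p₁, p₂, rfl, hp₂⟩ := p.exists_eq_append_last_mem S hp
      exact ⟨b, hbS, cons e h p₁, p₂, rfl, hp₂⟩
    push Not at hp
    obtain ⟨x, hx, hxS⟩ := hS
    obtain rfl : x = u := (List.mem_cons.mp hx).resolve_right fun hxp => hp x hxp hxS
    refine ⟨x, hxS, nil x, cons e h p, rfl, fun y hy hyS => ?_⟩
    exact (List.mem_cons.mp hy).resolve_right fun hyp => hp y hyp hyS

lemma exists_eq_append_of_mem_support (p : MWalk M u v) (ha : a ∈ p.support) :
    ∃ (p₁ : MWalk M u a) (p₂ : MWalk M a v), p = p₁.append p₂ := by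
  obtain ⟨a, rfl, p₁, p₂, hp, -⟩ := p.exists_eq_append_first_mem {a} ⟨a, ha, rfl⟩
  exact ⟨p₁, p₂, hp⟩

lemma isMPath_append_iff (p : MWalk M u v) (q : MWalk M v w) :
    (p.append q).IsMPath ↔ p.IsMPath ∧ q.IsMPath ∧ ∀ x ∈ p.support, x ∈ q.support → x = v := by
  have hv := p.end_mem_support
  rw [IsMPath, IsMPath, IsMPath, support_append, List.nodup_append', q.support_eq_cons,
    List.nodup_cons, List.tail_cons]
  constructor
  · rintro ⟨hp, hq, hpq⟩
    refine ⟨hp, ⟨fun hv' => hpq hv hv', hq⟩, fun x hx hxq => ?_⟩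
    exact (List.mem_cons.mp hxq).resolve_right (hpq hx)
  · rintro ⟨hp, ⟨hvq, hq⟩, hpq⟩
    refine ⟨hp, hq, fun x hx hxq => ?_⟩
    obtain rfl := hpq x hx (List.mem_cons_of_mem _ hxq)
    exact hvq hxq

lemma IsMPath.reverse {p : MWalk M u v} (hp : p.IsMPath) : p.reverse.IsMPath := by
  rw [IsMPath, support_reverse]
  exact List.nodup_reverse.mpr hp

lemma IsMPath.support_eq_singleton {p : MWalk M u u} (hp : p.IsMPath) : p.support = [u] := by
  cases p with
  | nil => rfl
  | cons _ _ q => exact absurd q.end_mem_support (List.nodup_cons.mp hp).1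

lemma IsMPath.ne_of_mem_edgeList {e : E} {x y : V} :
    ∀ {u v : V} {p : MWalk M u v}, p.IsMPath → e ∈ p.edgeList → M.ends e = s(x, y) → x ≠ y
  | _, _, nil _, _, he, _ => absurd he List.not_mem_nil
  | _, _, cons f hf p, hp, he, hxy => by
    obtain ⟨hu, hp⟩ := List.nodup_cons.mp hp
    rcases List.mem_cons.mp he with rfl | he
    · rintro rfl
      rw [hxy, Sym2.eq_iff] at hf
      rcases hf with ⟨rfl, rfl⟩ | ⟨rfl, rfl⟩ <;> exact hu p.start_mem_support
    · exact IsMPath.ne_of_mem_edgeList hp he hxy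

lemma isMPath_append_append {p₁ : MWalk M u a} {A : MWalk M a b} {p₃ : MWalk M b v}
    (hp₁ : p₁.IsMPath) (hA : A.IsMPath) (hp₃ : p₃.IsMPath)
    (h₁A : ∀ x ∈ p₁.support, x ∈ A.support → x = a)
    (hA₃ : ∀ x ∈ A.support, x ∈ p₃.support → x = b)
    (h₁₃ : p₁.support.Disjoint p₃.support) :
    (p₁.append (A.append p₃)).IsMPath := by
  refine (isMPath_append_iff _ _).mpr
    ⟨hp₁, (isMPath_append_iff _ _).mpr ⟨hA, hp₃, hA₃⟩, fun x hx hx' => ?_⟩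
  rcases (mem_support_append _ _).mp hx' with h | h
  exacts [h₁A x hx h, (h₁₃ hx h).elim]

lemma IsMPath.exists_first_last_mem {P : MWalk M u v} (hP : P.IsMPath) (S : Set V) {x y : V}
    (hx : x ∈ P.support) (hxS : x ∈ S) (hy : y ∈ P.support) (hyS : y ∈ S) (hxy : x ≠ y) :
    ∃ a ∈ S, ∃ b ∈ S, a ≠ b ∧ ∃ (p₁ : MWalk M u a) (p₃ : MWalk M b v),
      p₁.IsMPath ∧ p₃.IsMPath ∧ (∀ x ∈ p₁.support, x ∈ S → x = a) ∧
      (∀ x ∈ p₃.support, x ∈ S → x = b) ∧ p₁.support.Disjoint p₃.support := by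
  obtain ⟨a, haS, p₁, q, rfl, hp₁S⟩ := P.exists_eq_append_first_mem S ⟨x, hx, hxS⟩
  obtain ⟨b, hbS, m, p₃, rfl, hp₃S⟩ := q.exists_eq_append_last_mem S ⟨a, q.start_mem_support, haS⟩
  obtain ⟨hp₁, hq, hp₁q⟩ := (isMPath_append_iff _ _).mp hP
  obtain ⟨hm, hp₃, -⟩ := (isMPath_append_iff _ _).mp hq
  have hab : a ≠ b := by
    -- otherwise the middle part is a path from `a` to itself, so `P` meets `S` only at `a`
    rintro rfl
    have hS : ∀ z ∈ (p₁.append (m.append p₃)).support, z ∈ S → z = a := by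
      intro z hz hzS
      simp only [mem_support_append, hm.support_eq_singleton, List.mem_singleton] at hz
      rcases hz with hz | hz | hz
      exacts [hp₁S z hz hzS, hz, hp₃S z hz hzS]
    exact hxy ((hS x hx hxS).trans (hS y hy hyS).symm)
  refine ⟨a, haS, b, hbS, hab, p₁, p₃, hp₁, hp₃, hp₁S, hp₃S, fun z hz₁ hz₃ => ?_⟩
  obtain rfl := hp₁q z hz₁ ((mem_support_append _ _).mpr (.inr hz₃))
  exact hab (hp₃S z hz₃ haS)

lemma IsMCycle.exists_rotate {c : MWalk M v v} (hc : c.IsMCycle) (ha : a ∈ c.support) :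
    ∃ c' : MWalk M a a, c'.IsMCycle ∧ (∀ x, x ∈ c'.support ↔ x ∈ c.support) ∧
      c'.edgeList.Perm c.edgeList := by
  obtain ⟨c₁, c₂, rfl⟩ := c.exists_eq_append_of_mem_support ha
  have hperm : (c₂.append c₁).edgeList.Perm (c₁.append c₂).edgeList := by
    rw [edgeList_append, edgeList_append]
    exact List.perm_append_comm
  obtain ⟨hne, hend, hvnd⟩ := hc
  refine ⟨c₂.append c₁, ⟨?_, hperm.nodup_iff.mpr hend, ?_⟩, fun x => ?_, hperm⟩
  · exact fun h => hne (List.Perm.eq_nil (by rw [← h]; exact hperm.symm))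
  · rw [support_tail_append] at hvnd ⊢
    exact List.perm_append_comm.nodup_iff.mp hvnd
  · simp only [mem_support_append]
    exact or_comm

lemma IsMCycle.isMPath_of_eq_append {c : MWalk M a a} (hc : c.IsMCycle) {p : MWalk M a b}
    {q : MWalk M b a} (hab : a ≠ b) (h : c = p.append q) :
    p.IsMPath ∧ q.IsMPath ∧ p.edgeList.Disjoint q.edgeList := by
  obtain ⟨-, hend, hvnd⟩ := hc
  subst h
  rw [support_tail_append, List.nodup_append'] at hvnd
  rw [edgeList_append, List.nodup_append'] at hend
  obtain ⟨hpnd, hqnd, hpq⟩ := hvnd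
  refine ⟨?_, ?_, hend.2.2⟩
  · rw [IsMPath, p.support_eq_cons]
    exact List.nodup_cons.mpr ⟨fun h => hpq h (q.end_mem_support_tail hab.symm), hpnd⟩
  · rw [IsMPath, q.support_eq_cons]
    exact List.nodup_cons.mpr ⟨fun h => hpq (p.end_mem_support_tail hab) h, hqnd⟩

lemma IsMCycle.exists_two_paths {c : MWalk M v v} (hc : c.IsMCycle) (ha : a ∈ c.support)
    (hb : b ∈ c.support) (hab : a ≠ b) :
    ∃ A₁ A₂ : MWalk M a b, A₁.IsMPath ∧ A₂.IsMPath ∧ A₁.edgeList ≠ A₂.edgeList ∧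
      A₁.support ⊆ c.support ∧ A₂.support ⊆ c.support ∧
      A₁.edgeList ⊆ c.edgeList ∧ A₂.edgeList ⊆ c.edgeList := by
  obtain ⟨c', hc', hc'v, hc'e⟩ := hc.exists_rotate ha
  obtain ⟨A₁, A₂, rfl⟩ := c'.exists_eq_append_of_mem_support ((hc'v b).mpr hb)
  obtain ⟨hA₁, hA₂, hdisj⟩ := hc'.isMPath_of_eq_append hab rfl
  have hv : ∀ x, x ∈ A₁.support ∨ x ∈ A₂.support → x ∈ c.support := fun x hx =>
    (hc'v x).mp ((mem_support_append _ _).mpr hx)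
  have he : ∀ e, e ∈ A₁.edgeList ∨ e ∈ A₂.edgeList → e ∈ c.edgeList := fun e he =>
    hc'e.subset (by rw [edgeList_append]; exact List.mem_append.mpr he)
  refine ⟨A₁, A₂.reverse, hA₁, hA₂.reverse, fun h => ?_, fun x hx => hv x (.inl hx),
    fun x hx => hv x (.inr ?_), fun e he' => he e (.inl he'), fun e he' => he e (.inr ?_)⟩
  · obtain ⟨e, he₁⟩ := List.exists_mem_of_ne_nil _ (A₁.edgeList_ne_nil hab)
    have he₂ := h ▸ he₁
    rw [edgeList_reverse, List.mem_reverse] at he₂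
    exact hdisj he₁ he₂
  · rwa [support_reverse, List.mem_reverse] at hx
  · rwa [edgeList_reverse, List.mem_reverse] at he'

end MWalk

end Multigraph

lemma etrackSeq_append {E : Type} (T : Set E) (l₁ l₂ : List E) :
    etrackSeq T (l₁ ++ l₂) = etrackSeq T l₁ ++ etrackSeq T l₂ :=
  List.filter_append _ _

lemma etrackSeq_eq_nil {E : Type} {T : Set E} {l : List E} (h : ∀ e ∈ l, e ∉ T) :
    etrackSeq T l = [] :=
  List.filter_eq_nil_iff.mpr fun e he => by simpa using h e he

lemma IsTrackingEdgeSet.edgeList_eq_of_notMem {V E : Type} {M : Multigraph V E} {s t a b : V}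
    {T : Set E} (hT : IsTrackingEdgeSet M s t T) {p₁ : MWalk M s a} {p₃ : MWalk M b t}
    {A₁ A₂ : MWalk M a b} (h₁ : (p₁.append (A₁.append p₃)).IsMPath)
    (h₂ : (p₁.append (A₂.append p₃)).IsMPath) (hA₁ : ∀ e ∈ A₁.edgeList, e ∉ T)
    (hA₂ : ∀ e ∈ A₂.edgeList, e ∉ T) :
    A₁.edgeList = A₂.edgeList := by
  have h := congrArg MWalk.edgeList <| hT _ _ h₁ h₂ <| by
    simp only [MWalk.edgeList_append, etrackSeq_append, etrackSeq_eq_nil hA₁,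
      etrackSeq_eq_nil hA₂]
  simpa only [MWalk.edgeList_append, List.append_cancel_left_eq, List.append_cancel_right_eq]
    using h

theorem stmt10_general {V E : Type} (M : Multigraph V E) (s t : V)
    (hred : MReduced M s t) (T : Set E) (hT : IsTrackingEdgeSet M s t T) :
    ∀ (v : V) (c : MWalk M v v), c.IsMCycle → ∃ e ∈ c.edgeList, e ∈ T := by
  intro v c hc
  by_contra! hcT
  obtain ⟨e₀, he₀⟩ := List.exists_mem_of_ne_nil _ hc.1
  obtain ⟨x, y, hxy⟩ : ∃ x y, M.ends e₀ = s(x, y) := Sym2.ind (fun x y => ⟨x, y, rfl⟩) (M.ends e₀)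
  obtain ⟨P, hP, he₀P⟩ := hred.2 e₀
  obtain ⟨hxP, hyP⟩ := P.mem_support_of_mem_edgeList he₀P hxy
  obtain ⟨hxc, hyc⟩ := c.mem_support_of_mem_edgeList he₀ hxy
  obtain ⟨a, ha, b, hb, hab, p₁, p₃, hp₁, hp₃, hp₁c, hp₃c, h₁₃⟩ :=
    hP.exists_first_last_mem {z | z ∈ c.support} hxP hxc hyP hyc (hP.ne_of_mem_edgeList he₀P hxy)
  obtain ⟨A₁, A₂, hA₁, hA₂, hne, hA₁v, hA₂v, hA₁e, hA₂e⟩ := hc.exists_two_paths ha hb hab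
  have hsplice : ∀ A : MWalk M a b, A.IsMPath → A.support ⊆ c.support →
      (p₁.append (A.append p₃)).IsMPath := fun A hA hAc =>
    MWalk.isMPath_append_append hp₁ hA hp₃ (fun z hz hzA => hp₁c z hz (hAc hzA))
      (fun z hzA hz => hp₃c z hz (hAc hzA)) h₁₃
  exact hne (hT.edgeList_eq_of_notMem (hsplice A₁ hA₁ hA₁v) (hsplice A₂ hA₂ hA₂v)
    (fun e he => hcT e (hA₁e he)) (fun e he => hcT e (hA₂e he)))

theorem stmt10 {V E : Type} [Fintype V] [Fintype E] (M : Multigraph V E) (s t : V)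
    (hred : MReduced M s t) (T : Set E) (hT : IsTrackingEdgeSet M s t T) :
    ∀ (v : V) (c : MWalk M v v), c.IsMCycle → ∃ e ∈ c.edgeList, e ∈ T :=
  stmt10_general M s t hred T hT
end

section
/- There exists a family of chordal s-t graphs G_n on n vertices for which the minimum feedback vertex set has size 1 while every tracking set has size n − 2; hence the ratio between minimum tracking set and minimum feedback vertex set is unbounded even on chordal graphs. -/
/-!
Take the triangular book on `Fin n` with spine `s x`: every other vertex is adjacent exactly to
`s` and `x`. Every edge meets `{s, x}`, so a cycle avoiding `s` would live in the star around `x`;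
hence `{s}` is a feedback vertex set, and the same observation shows that in a cycle of length
at least four the spine `s x` is a chord. For the page `t`, the `s`-`t` path `s x t` differs
from `s t` only by `x`, and `s v x t` from `s x t` only by `v`, so a tracking set must contain
all vertices but `s` and `t`; conversely `{s, t}ᶜ` is a tracking set in any graph, since an `s`-`t`
path is determined by its interior.
-/

open SimpleGraph

/-- `S` is a feedback vertex set: every cycle of `G` meets `S`. -/
def IsFVS {V : Type} (G : SimpleGraph V) (S : Set V) : Prop :=
  ∀ (v : V) (c : G.Walk v v), c.IsCycle → ∃ x ∈ c.support, x ∈ S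

/-- The neighbourhood of a set of vertices. -/
def nbhd {V : Type} (G : SimpleGraph V) (S : Set V) : Set V :=
  {v | ∃ u ∈ S, G.Adj u v}

variable {V : Type} {G : SimpleGraph V}

lemma trackSeq_erase_of_notMem [DecidableEq V] {T : Set V} {v : V} (hv : v ∉ T) (l : List V) :
    trackSeq T (l.erase v) = trackSeq T l := by
  unfold trackSeq
  rw [← List.erase_filter, List.erase_of_not_mem]
  simp [List.mem_filter, hv]

theorem SimpleGraph.Walk.support_eq_cons_append {s t : V} (p : G.Walk s t) (hst : s ≠ t) :
    p.support = s :: (p.support.tail.dropLast ++ [t]) := by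
  have hne : p.support.tail ≠ [] := List.ne_nil_of_mem (p.end_mem_tail_support_of_ne hst)
  rw [← p.cons_tail_support]
  conv_lhs => rw [← List.dropLast_concat_getLast hne]
  simp

lemma trackSeq_compl_pair_support {s t : V} {p : G.Walk s t} (hp : p.IsPath) (hst : s ≠ t) :
    trackSeq {s, t}ᶜ p.support = p.support.tail.dropLast := by
  have hnd := hp.support_nodup
  rw [p.support_eq_cons_append hst] at hnd ⊢
  simp only [List.nodup_cons, List.nodup_append, List.mem_append] at hnd
  have hmid : ∀ a ∈ p.support.tail.dropLast, a ≠ s ∧ a ≠ t := by grind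
  simpa [trackSeq, List.filter_eq_self] using hmid

theorem isTrackingSet_compl_pair {s t : V} (hst : s ≠ t) : IsTrackingSet G s t {s, t}ᶜ := by
  intro p q hp hq h
  rw [trackSeq_compl_pair_support hp hst, trackSeq_compl_pair_support hq hst] at h
  exact Walk.ext_support (by rw [p.support_eq_cons_append hst, q.support_eq_cons_append hst, h])

theorem IsTrackingSet.mem_of_support_erase [DecidableEq V] {s t v : V} {T : Set V}
    (hT : IsTrackingSet G s t T) {p q : G.Walk s t} (hp : p.IsPath) (hq : q.IsPath)
    (hpq : p ≠ q) (h : p.support.erase v = q.support) : v ∈ T := by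
  by_contra hv
  exact hpq (hT p q hp hq (by rw [← h, trackSeq_erase_of_notMem hv]))

theorem IsFVS.nonempty_of_adj {F : Set V} (hF : IsFVS G F) {a b c : V} (hab : G.Adj a b)
    (hbc : G.Adj b c) (hca : G.Adj c a) : F.Nonempty := by
  have hcyc : (Walk.cons hab (Walk.cons hbc (Walk.cons hca Walk.nil))).IsCycle := by
    simp [Walk.cons_isCycle_iff, hab.ne, hab.ne.symm, hbc.ne, hca.ne, hca.ne.symm]
  obtain ⟨y, -, hy⟩ := hF a _ hcyc
  exact ⟨y, hy⟩

namespace SimpleGraph.Walk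

variable {u v : V} {c : G.Walk v v}

lemma mem_support_of_mem_neighborSet_toSubgraph {w : V}
    (h : w ∈ c.toSubgraph.neighborSet u) : w ∈ c.support :=
  c.mem_verts_toSubgraph.mp (c.toSubgraph.neighborSet_subset_verts u h)

lemma IsCycle.neighborSet_toSubgraph_eq_of_subset (hc : c.IsCycle) (hu : u ∈ c.support)
    {a b : V} (h : G.neighborSet u ⊆ {a, b}) : c.toSubgraph.neighborSet u = {a, b} := by
  refine Set.eq_of_subset_of_ncard_le ((c.toSubgraph.neighborSet_subset u).trans h) ?_
  rw [hc.ncard_neighborSet_toSubgraph_eq_two hu]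
  exact (Set.ncard_insert_le a {b}).trans (by rw [Set.ncard_singleton])

lemma IsCycle.exists_mem_support_notMem_pair (hc : c.IsCycle) (hlen : 4 ≤ c.length) (a b : V) :
    ∃ u₁ ∈ c.support, ∃ u₂ ∈ c.support, u₁ ≠ u₂ ∧ u₁ ∉ ({a, b} : Set V) ∧
      u₂ ∉ ({a, b} : Set V) := by
  classical
  have hcard : c.support.tail.toFinset.card = c.length := by
    rw [List.toFinset_card_of_nodup hc.support_nodup, List.length_tail, length_support]
    rfl
  have hsdiff : 1 < (c.support.tail.toFinset \ {a, b}).card := by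
    have := Finset.le_card_sdiff {a, b} c.support.tail.toFinset
    have := Finset.card_le_two (a := a) (b := b)
    omega
  obtain ⟨u₁, hu₁, u₂, hu₂, hne⟩ := Finset.one_lt_card.mp hsdiff
  simp only [Finset.mem_sdiff, List.mem_toFinset] at hu₁ hu₂
  exact ⟨u₁, List.mem_of_mem_tail hu₁.1, u₂, List.mem_of_mem_tail hu₂.1, hne,
    by simpa using hu₁.2, by simpa using hu₂.2⟩

end SimpleGraph.Walk

section TwoVertexCover

variable {a b : V}

-- A cycle avoiding `a` has a vertex `u ∉ {a, b}`, and both cycle-neighbours of `u` lie in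
-- `{a, b}`, so one of them is `a`.
theorem isFVS_singleton_of_neighborSet_subset
    (hcover : ∀ u, u ≠ a → u ≠ b → G.neighborSet u ⊆ {a, b}) : IsFVS G {a} := by
  intro v c hc
  by_contra! ha
  have haS : a ∉ c.support := fun h => ha a h rfl
  obtain ⟨u, hu, hub⟩ := Set.exists_ne_of_one_lt_ncard
    (by rw [hc.ncard_neighborSet_toSubgraph_eq_two c.start_mem_support]; norm_num) b
  have huS := Walk.mem_support_of_mem_neighborSet_toSubgraph hu
  have hua : u ≠ a := fun h => haS (h ▸ huS)
  have hN := hc.neighborSet_toSubgraph_eq_of_subset huS (hcover u hua hub)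
  exact haS (Walk.mem_support_of_mem_neighborSet_toSubgraph (hN ▸ Set.mem_insert a {b}))

-- Two vertices `u₁ u₂ ∉ {a, b}` of a long cycle are both cycle-neighbours of `a`, so `ab` is not
-- a cycle edge.
theorem isChordal_of_neighborSet_subset (hab : G.Adj a b)
    (hcover : ∀ u, u ≠ a → u ≠ b → G.neighborSet u ⊆ {a, b}) : IsChordal G := by
  intro v c hc hlen
  obtain ⟨u₁, hu₁, u₂, hu₂, hne, hu₁ab, hu₂ab⟩ := hc.exists_mem_support_notMem_pair hlen a b
  simp only [Set.mem_insert_iff, Set.mem_singleton_iff, not_or] at hu₁ab hu₂ab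
  have hN₁ := hc.neighborSet_toSubgraph_eq_of_subset hu₁ (hcover u₁ hu₁ab.1 hu₁ab.2)
  have hN₂ := hc.neighborSet_toSubgraph_eq_of_subset hu₂ (hcover u₂ hu₂ab.1 hu₂ab.2)
  have ha₁ : a ∈ c.toSubgraph.neighborSet u₁ := hN₁ ▸ Set.mem_insert a {b}
  have ha₂ : a ∈ c.toSubgraph.neighborSet u₂ := hN₂ ▸ Set.mem_insert a {b}
  have hb₁ : b ∈ c.toSubgraph.neighborSet u₁ := hN₁ ▸ Set.mem_insert_of_mem a rfl
  refine ⟨a, Walk.mem_support_of_mem_neighborSet_toSubgraph ha₁,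
    b, Walk.mem_support_of_mem_neighborSet_toSubgraph hb₁, hab, fun hchord => ?_⟩
  have hNa : c.toSubgraph.neighborSet a = {u₁, u₂} := by
    refine (Set.eq_of_subset_of_ncard_le ?_ ?_ c.finite_neighborSet_toSubgraph).symm
    · exact Set.insert_subset (Subgraph.Adj.symm ha₁)
        (Set.singleton_subset_iff.mpr (Subgraph.Adj.symm ha₂))
    · rw [hc.ncard_neighborSet_toSubgraph_eq_two
        (Walk.mem_support_of_mem_neighborSet_toSubgraph ha₁), Set.ncard_pair hne]
  have hb : b ∈ c.toSubgraph.neighborSet a := (c.mem_edges_toSubgraph.mpr hchord :)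
  rw [hNa] at hb
  rcases hb with rfl | rfl
  · exact hu₁ab.2 rfl
  · exact hu₂ab.2 rfl

end TwoVertexCover

-- Triangles `a b u` glued along their common edge `ab`, the spine; the paper's `G_n` is
-- `triangularBook s x` on `Fin n`.
def SimpleGraph.triangularBook (a b : V) : SimpleGraph V :=
  SimpleGraph.fromRel fun u _ => u = a ∨ u = b

namespace SimpleGraph.triangularBook

variable {a b u : V}

lemma adj_left (h : a ≠ u) : (triangularBook a b).Adj a u := by
  simp [triangularBook, h]

lemma adj_right (h : b ≠ u) : (triangularBook a b).Adj b u := by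
  simp [triangularBook, h]

lemma neighborSet_subset (hua : u ≠ a) (hub : u ≠ b) :
    (triangularBook a b).neighborSet u ⊆ {a, b} := by
  intro w hw
  simp only [mem_neighborSet, triangularBook, fromRel_adj] at hw
  grind

variable {s t x v : V}

def directWalk (hst : s ≠ t) : (triangularBook s x).Walk s t :=
  .cons (adj_left hst) .nil

def spineWalk (hsx : s ≠ x) (hxt : x ≠ t) : (triangularBook s x).Walk s t :=
  .cons (adj_left hsx) (.cons (adj_right hxt) .nil)

def pageWalk (hsv : s ≠ v) (hxv : x ≠ v) (hxt : x ≠ t) : (triangularBook s x).Walk s t :=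
  .cons (adj_left hsv) (.cons (adj_right hxv).symm (.cons (adj_right hxt) .nil))

lemma isPath_directWalk (hst : s ≠ t) : (directWalk (x := x) hst).IsPath := by
  simp [directWalk, hst]

lemma isPath_spineWalk (hst : s ≠ t) (hsx : s ≠ x) (hxt : x ≠ t) :
    (spineWalk hsx hxt).IsPath := by
  simp [spineWalk, hst, hsx, hxt]

lemma isPath_pageWalk (hst : s ≠ t) (hsx : s ≠ x) (hxt : x ≠ t) (hsv : s ≠ v) (hxv : x ≠ v)
    (hvt : v ≠ t) : (pageWalk hsv hxv hxt).IsPath := by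
  simp [pageWalk, hst, hsx, hsv, hxt, hvt, Ne.symm hxv]

lemma exists_isPath_mem_edges_left (hst : s ≠ t) (hsx : s ≠ x) (hxt : x ≠ t) (hsv : s ≠ v) :
    ∃ p : (triangularBook s x).Walk s t, p.IsPath ∧ s(s, v) ∈ p.edges := by
  by_cases hvt : v = t
  · subst hvt
    exact ⟨_, isPath_directWalk hst, by simp [directWalk]⟩
  by_cases hvx : v = x
  · subst hvx
    exact ⟨_, isPath_spineWalk hst hsx hxt, by simp [spineWalk]⟩
  exact ⟨_, isPath_pageWalk hst hsx hxt hsv (Ne.symm hvx) hvt, by simp [pageWalk]⟩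

lemma exists_isPath_mem_edges_right (hst : s ≠ t) (hsx : s ≠ x) (hxt : x ≠ t) (hxv : x ≠ v) :
    ∃ p : (triangularBook s x).Walk s t, p.IsPath ∧ s(x, v) ∈ p.edges := by
  by_cases hvs : v = s
  · subst hvs
    exact ⟨_, isPath_spineWalk hst hsx hxt, by simp [spineWalk, Sym2.eq_swap]⟩
  by_cases hvt : v = t
  · subst hvt
    exact ⟨_, isPath_spineWalk hst hsx hxt, by simp [spineWalk]⟩
  exact ⟨_, isPath_pageWalk hst hsx hxt (Ne.symm hvs) hxv hvt,
    by simp [pageWalk, Sym2.eq_swap]⟩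

theorem reduced (hst : s ≠ t) (hsx : s ≠ x) (hxt : x ≠ t) :
    Reduced (triangularBook s x) s t := by
  constructor
  · intro v
    by_cases hsv : s = v
    · exact ⟨_, isPath_directWalk hst, by simp [← hsv]⟩
    obtain ⟨p, hp, hv⟩ := exists_isPath_mem_edges_left hst hsx hxt hsv
    exact ⟨p, hp, p.snd_mem_support_of_mem_edges hv⟩
  · rintro ⟨u, w⟩ he
    simp only [mem_edgeSet, triangularBook, fromRel_adj] at he
    rcases he with ⟨huw, (rfl | rfl) | (rfl | rfl)⟩
    · exact exists_isPath_mem_edges_left hst hsx hxt huw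
    · exact exists_isPath_mem_edges_right hst hsx hxt huw
    · simpa [Sym2.eq_swap] using exists_isPath_mem_edges_left hst hsx hxt huw.symm
    · simpa [Sym2.eq_swap] using exists_isPath_mem_edges_right hst hsx hxt huw.symm

theorem compl_pair_subset_of_isTrackingSet (hst : s ≠ t) (hsx : s ≠ x)
    (hxt : x ≠ t) {T : Set V} (hT : IsTrackingSet (triangularBook s x) s t T) :
    ({s, t} : Set V)ᶜ ⊆ T := by
  classical
  have hxT : x ∈ T := hT.mem_of_support_erase (isPath_spineWalk hst hsx hxt)
    (isPath_directWalk hst)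
    (fun h => by simpa [spineWalk, directWalk] using congrArg Walk.length h)
    (by simp [spineWalk, directWalk, hsx])
  intro v hv
  simp only [Set.mem_compl_iff, Set.mem_insert_iff, Set.mem_singleton_iff, not_or] at hv
  by_cases hxv : x = v
  · exact hxv ▸ hxT
  exact hT.mem_of_support_erase (isPath_pageWalk hst hsx hxt (Ne.symm hv.1) hxv hv.2)
    (isPath_spineWalk hst hsx hxt)
    (fun h => by simpa [pageWalk, spineWalk] using congrArg Walk.length h)
    (by simp [pageWalk, spineWalk, Ne.symm hv.1])

end SimpleGraph.triangularBook

theorem stmt19 : ∀ n : ℕ, 4 ≤ n →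
    ∃ (G : SimpleGraph (Fin n)) (s t : Fin n),
      IsChordal G ∧ s ≠ t ∧ Reduced G s t ∧
      (∃ F : Set (Fin n), IsFVS G F ∧ F.ncard = 1) ∧
      (∀ F : Set (Fin n), IsFVS G F → 1 ≤ F.ncard) ∧
      (∃ T : Set (Fin n), IsTrackingSet G s t T ∧ T.ncard = n - 2) ∧
      (∀ T : Set (Fin n), IsTrackingSet G s t T → n - 2 ≤ T.ncard) := by
  intro n hn
  let s : Fin n := ⟨0, by omega⟩
  let t : Fin n := ⟨1, by omega⟩
  let x : Fin n := ⟨2, by omega⟩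
  have hst : s ≠ t := by simp [s, t, Fin.ext_iff]
  have hsx : s ≠ x := by simp [s, x, Fin.ext_iff]
  have hxt : x ≠ t := by simp [x, t, Fin.ext_iff]
  have hcover (u : Fin n) := triangularBook.neighborSet_subset (u := u) (a := s) (b := x)
  have hcompl : ({s, t}ᶜ : Set (Fin n)).ncard = n - 2 := by
    rw [Set.ncard_compl, Set.ncard_pair hst, Nat.card_eq_fintype_card, Fintype.card_fin]
  refine ⟨triangularBook s x, s, t,
    isChordal_of_neighborSet_subset (triangularBook.adj_left hsx) hcover, hst,
    triangularBook.reduced hst hsx hxt,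
    ⟨{s}, isFVS_singleton_of_neighborSet_subset hcover, Set.ncard_singleton s⟩,
    fun F hF => ?_, ⟨_, isTrackingSet_compl_pair hst, hcompl⟩, fun T hT => ?_⟩
  · exact (hF.nonempty_of_adj (triangularBook.adj_left hst) (triangularBook.adj_right hxt).symm
      (triangularBook.adj_left hsx).symm).ncard_pos
  · exact hcompl ▸ Set.ncard_le_ncard
      (triangularBook.compl_pair_subset_of_isTrackingSet hst hsx hxt hT)
end
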